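/- arXiv:2509.06841 — 6 statements merged into one kernel-verified Lean document; each statement's English description precedes it below -/
import Mathlib

section
/- Let G and H be finite simple graphs such that H has at least one vertex, and let h be a surjective p-morphism from Pos(G) onto Pos(H). Then h({⊤₁, ⊤₂}) ⊆ {⊤₁, ⊤₂}. -/
/-- The carrier of the poset `Pos(G)`: vertices, two copies of the vertices,
two copies of the edges, and four auxiliary elements. -/
inductive PosElem (V E : Type) : Type where
  | ver (v : V)
  | verA (v : V)
  | verB (v : V)
  | edge1 (e : E)
  | edge2 (e : E)
  | top1
  | top2
  | infA
  | infB

/-- The covering relation of the poset `Pos(G)`, for a graph `G` together with a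
choice `ε` of an ordered pair of endpoints for each edge. -/
inductive PosCov {V : Type} (G : SimpleGraph V) (ε : ↥G.edgeSet → V × V) :
    PosElem V ↥G.edgeSet → PosElem V ↥G.edgeSet → Prop where
  | ver_verA (v : V) : PosCov G ε (.ver v) (.verA v)
  | ver_verB (v : V) : PosCov G ε (.ver v) (.verB v)
  | verA_infA (v : V) : PosCov G ε (.verA v) .infA
  | verB_infB (v : V) : PosCov G ε (.verB v) .infB
  | edge1_top1 (e : ↥G.edgeSet) : PosCov G ε (.edge1 e) .top1
  | edge1_top2 (e : ↥G.edgeSet) : PosCov G ε (.edge1 e) .top2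
  | edge2_top1 (e : ↥G.edgeSet) : PosCov G ε (.edge2 e) .top1
  | edge2_top2 (e : ↥G.edgeSet) : PosCov G ε (.edge2 e) .top2
  | isolA_top1 (v : V) (hv : ∀ w, ¬ G.Adj v w) : PosCov G ε (.verA v) .top1
  | isolA_top2 (v : V) (hv : ∀ w, ¬ G.Adj v w) : PosCov G ε (.verA v) .top2
  | isolB_top1 (v : V) (hv : ∀ w, ¬ G.Adj v w) : PosCov G ε (.verB v) .top1
  | isolB_top2 (v : V) (hv : ∀ w, ¬ G.Adj v w) : PosCov G ε (.verB v) .top2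
  | ua_edge1 (e : ↥G.edgeSet) : PosCov G ε (.verA (ε e).1) (.edge1 e)
  | vb_edge1 (e : ↥G.edgeSet) : PosCov G ε (.verB (ε e).2) (.edge1 e)
  | ub_edge2 (e : ↥G.edgeSet) : PosCov G ε (.verB (ε e).1) (.edge2 e)
  | va_edge2 (e : ↥G.edgeSet) : PosCov G ε (.verA (ε e).2) (.edge2 e)

/-- The order of `Pos(G)`: the reflexive-transitive closure of the covering relation. -/
def PosLe {V : Type} (G : SimpleGraph V) (ε : ↥G.edgeSet → V × V)
    (x y : PosElem V ↥G.edgeSet) : Prop :=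
  Relation.ReflTransGen (PosCov G ε) x y

/-- `ε` assigns to every edge an ordered pair of its two endpoints. -/
def OrientOK {V : Type} (G : SimpleGraph V) (ε : ↥G.edgeSet → V × V) : Prop :=
  ∀ e : ↥G.edgeSet, (e : Sym2 V) = s((ε e).1, (ε e).2)

/-- A p-morphism with respect to given order relations: the homomorphism property (HP)
and the backward property (BP). -/
def IsPMorphismRel {α β : Type} (leP : α → α → Prop) (leQ : β → β → Prop)
    (h : α → β) : Prop :=
  (∀ x y, leP x y → leQ (h x) (h y)) ∧
  (∀ (x : α) (y : β), leQ (h x) y → ∃ z : α, leP x z ∧ h z = y)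

section Aux
variable {V : Type} {G : SimpleGraph V} {ε : ↥G.edgeSet → V × V}

lemma posle_single {x y : PosElem V ↥G.edgeSet} (hc : PosCov G ε x y) : PosLe G ε x y :=
  Relation.ReflTransGen.single hc

lemma top1_max {y} (hl : PosLe G ε .top1 y) : y = .top1 := by
  rcases Relation.ReflTransGen.cases_head hl with heq | ⟨c, hc, _⟩
  · exact heq.symm
  · cases hc

lemma top2_max {y} (hl : PosLe G ε .top2 y) : y = .top2 := by
  rcases Relation.ReflTransGen.cases_head hl with heq | ⟨c, hc, _⟩
  · exact heq.symm
  · cases hc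

lemma infA_max {y} (hl : PosLe G ε .infA y) : y = .infA := by
  rcases Relation.ReflTransGen.cases_head hl with heq | ⟨c, hc, _⟩
  · exact heq.symm
  · cases hc

lemma infB_max {y} (hl : PosLe G ε .infB y) : y = .infB := by
  rcases Relation.ReflTransGen.cases_head hl with heq | ⟨c, hc, _⟩
  · exact heq.symm
  · cases hc

lemma le_infA {x : PosElem V ↥G.edgeSet} (hl : PosLe G ε x .infA) :
    (∃ v, x = .ver v) ∨ (∃ v, x = .verA v) ∨ x = .infA := by
  induction hl using Relation.ReflTransGen.head_induction_on with
  | refl => right; right; rfl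
  | head hc _ ih => cases hc <;> simp_all

lemma le_infB {x : PosElem V ↥G.edgeSet} (hl : PosLe G ε x .infB) :
    (∃ v, x = .ver v) ∨ (∃ v, x = .verB v) ∨ x = .infB := by
  induction hl using Relation.ReflTransGen.head_induction_on with
  | refl => right; right; rfl
  | head hc _ ih => cases hc <;> simp_all

lemma to_max (x : PosElem V ↥G.edgeSet) :
    ∃ m, PosLe G ε x m ∧ (m = .top1 ∨ m = .top2 ∨ m = .infA ∨ m = .infB) := by
  cases x with
  | ver v => exact ⟨.infA, Relation.ReflTransGen.trans (posle_single (.ver_verA v))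
      (posle_single (.verA_infA v)), by simp⟩
  | verA v => exact ⟨.infA, posle_single (.verA_infA v), by simp⟩
  | verB v => exact ⟨.infB, posle_single (.verB_infB v), by simp⟩
  | edge1 e => exact ⟨.top1, posle_single (.edge1_top1 e), by simp⟩
  | edge2 e => exact ⟨.top1, posle_single (.edge2_top1 e), by simp⟩
  | top1 => exact ⟨.top1, Relation.ReflTransGen.refl, by simp⟩
  | top2 => exact ⟨.top2, Relation.ReflTransGen.refl, by simp⟩
  | infA => exact ⟨.infA, Relation.ReflTransGen.refl, by simp⟩
  | infB => exact ⟨.infB, Relation.ReflTransGen.refl, by simp⟩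

lemma verA_le_top1 (hε : OrientOK G ε) (v : V) : PosLe G ε (.verA v) .top1 := by
  by_cases hv : ∀ w, ¬ G.Adj v w
  · exact posle_single (.isolA_top1 v hv)
  · push_neg at hv
    obtain ⟨u, hu⟩ := hv
    set e : ↥G.edgeSet := ⟨s(v,u), G.mem_edgeSet.mpr hu⟩ with hedef
    have h2 : s(v,u) = s((ε e).1, (ε e).2) := hε e
    rw [Sym2.eq_iff] at h2
    rcases h2 with ⟨h3, _⟩ | ⟨h3, _⟩
    · refine Relation.ReflTransGen.trans (posle_single ?_) (posle_single (.edge1_top1 e))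
      rw [h3]; exact .ua_edge1 e
    · refine Relation.ReflTransGen.trans (posle_single ?_) (posle_single (.edge2_top1 e))
      rw [h3]; exact .va_edge2 e

lemma verA_le_top2 (hε : OrientOK G ε) (v : V) : PosLe G ε (.verA v) .top2 := by
  by_cases hv : ∀ w, ¬ G.Adj v w
  · exact posle_single (.isolA_top2 v hv)
  · push_neg at hv
    obtain ⟨u, hu⟩ := hv
    set e : ↥G.edgeSet := ⟨s(v,u), G.mem_edgeSet.mpr hu⟩ with hedef
    have h2 : s(v,u) = s((ε e).1, (ε e).2) := hε e
    rw [Sym2.eq_iff] at h2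
    rcases h2 with ⟨h3, _⟩ | ⟨h3, _⟩
    · refine Relation.ReflTransGen.trans (posle_single ?_) (posle_single (.edge1_top2 e))
      rw [h3]; exact .ua_edge1 e
    · refine Relation.ReflTransGen.trans (posle_single ?_) (posle_single (.edge2_top2 e))
      rw [h3]; exact .va_edge2 e

lemma verB_le_top1 (hε : OrientOK G ε) (v : V) : PosLe G ε (.verB v) .top1 := by
  by_cases hv : ∀ w, ¬ G.Adj v w
  · exact posle_single (.isolB_top1 v hv)
  · push_neg at hv
    obtain ⟨u, hu⟩ := hv
    set e : ↥G.edgeSet := ⟨s(v,u), G.mem_edgeSet.mpr hu⟩ with hedef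
    have h2 : s(v,u) = s((ε e).1, (ε e).2) := hε e
    rw [Sym2.eq_iff] at h2
    rcases h2 with ⟨h3, _⟩ | ⟨h3, _⟩
    · refine Relation.ReflTransGen.trans (posle_single ?_) (posle_single (.edge2_top1 e))
      rw [h3]; exact .ub_edge2 e
    · refine Relation.ReflTransGen.trans (posle_single ?_) (posle_single (.edge1_top1 e))
      rw [h3]; exact .vb_edge1 e

lemma verB_le_top2 (hε : OrientOK G ε) (v : V) : PosLe G ε (.verB v) .top2 := by
  by_cases hv : ∀ w, ¬ G.Adj v w
  · exact posle_single (.isolB_top2 v hv)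
  · push_neg at hv
    obtain ⟨u, hu⟩ := hv
    set e : ↥G.edgeSet := ⟨s(v,u), G.mem_edgeSet.mpr hu⟩ with hedef
    have h2 : s(v,u) = s((ε e).1, (ε e).2) := hε e
    rw [Sym2.eq_iff] at h2
    rcases h2 with ⟨h3, _⟩ | ⟨h3, _⟩
    · refine Relation.ReflTransGen.trans (posle_single ?_) (posle_single (.edge2_top2 e))
      rw [h3]; exact .ub_edge2 e
    · refine Relation.ReflTransGen.trans (posle_single ?_) (posle_single (.edge1_top2 e))
      rw [h3]; exact .vb_edge1 e

lemma ver_le_top1 (hε : OrientOK G ε) (v : V) : PosLe G ε (.ver v) .top1 :=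
  Relation.ReflTransGen.trans (posle_single (.ver_verA v)) (verA_le_top1 hε v)

lemma ver_le_top2 (hε : OrientOK G ε) (v : V) : PosLe G ε (.ver v) .top2 :=
  Relation.ReflTransGen.trans (posle_single (.ver_verA v)) (verA_le_top2 hε v)

end Aux

theorem top_maps_into_top {VG VH : Type} [Fintype VG] [Fintype VH] [Nonempty VH]
    (G : SimpleGraph VG) (H : SimpleGraph VH)
    (εG : ↥G.edgeSet → VG × VG) (hεG : OrientOK G εG)
    (εH : ↥H.edgeSet → VH × VH) (hεH : OrientOK H εH)
    (h : PosElem VG ↥G.edgeSet → PosElem VH ↥H.edgeSet)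
    (hsurj : Function.Surjective h)
    (hpm : IsPMorphismRel (PosLe G εG) (PosLe H εH) h) :
    h '' {PosElem.top1, PosElem.top2} ⊆ {PosElem.top1, PosElem.top2} := by
  have main : ∀ x : PosElem VG ↥G.edgeSet, (x = .top1 ∨ x = .top2) →
      (h x = .top1 ∨ h x = .top2) := by
    intro x hx
    have hmaxG : ∀ y, PosLe G εG x y → y = x := by
      rcases hx with rfl | rfl
      · exact fun y hy => top1_max hy
      · exact fun y hy => top2_max hy
    have hmaxH : ∀ y, PosLe H εH (h x) y → y = h x := by
      intro y hy
      obtain ⟨z, hz, rfl⟩ := hpm.2 x y hy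
      rw [hmaxG z hz]
    have hverx : ∀ v, PosLe G εG (.ver v) x := by
      rcases hx with rfl | rfl
      · exact fun v => ver_le_top1 hεG v
      · exact fun v => ver_le_top2 hεG v
    have hnotA : h x ≠ .infA := by
      intro hhx
      obtain ⟨w⟩ := (inferInstance : Nonempty VH)
      obtain ⟨x0, hx0⟩ := hsurj (.verB w)
      have g1 : PosLe H εH (h x0) .infB := by
        rw [hx0]; exact posle_single (.verB_infB w)
      have g2 : PosLe H εH (h x0) .top1 := by rw [hx0]; exact verB_le_top1 hεH w
      have g3 : PosLe H εH (h x0) .top2 := by rw [hx0]; exact verB_le_top2 hεH w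
      obtain ⟨z1, hz1, hz1'⟩ := hpm.2 x0 _ g1
      obtain ⟨z2, hz2, hz2'⟩ := hpm.2 x0 _ g2
      obtain ⟨z3, hz3, hz3'⟩ := hpm.2 x0 _ g3
      obtain ⟨m1, hm1, hm1'⟩ := to_max (G := G) (ε := εG) z1
      obtain ⟨m2, hm2, hm2'⟩ := to_max (G := G) (ε := εG) z2
      obtain ⟨m3, hm3, hm3'⟩ := to_max (G := G) (ε := εG) z3
      have him1 : h m1 = .infB := by
        have hh := hpm.1 z1 m1 hm1
        rw [hz1'] at hh
        exact infB_max hh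
      have him2 : h m2 = .top1 := by
        have hh := hpm.1 z2 m2 hm2
        rw [hz2'] at hh
        exact top1_max hh
      have him3 : h m3 = .top2 := by
        have hh := hpm.1 z3 m3 hm3
        rw [hz3'] at hh
        exact top2_max hh
      have k1 : PosLe G εG x0 m1 := Relation.ReflTransGen.trans hz1 hm1
      have k2 : PosLe G εG x0 m2 := Relation.ReflTransGen.trans hz2 hm2
      have k3 : PosLe G εG x0 m3 := Relation.ReflTransGen.trans hz3 hm3
      have kA : PosLe G εG x0 .infA := by
        rcases hx with rfl | rfl <;>
          rcases hm1' with rfl|rfl|rfl|rfl <;> rcases hm2' with rfl|rfl|rfl|rfl <;>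
          rcases hm3' with rfl|rfl|rfl|rfl <;>
          first
            | exact k1
            | exact k2
            | exact k3
            | exact absurd (hhx.symm.trans him1) (by simp)
            | exact absurd (hhx.symm.trans him2) (by simp)
            | exact absurd (hhx.symm.trans him3) (by simp)
            | exact absurd (him1.symm.trans him2) (by simp)
            | exact absurd (him1.symm.trans him3) (by simp)
            | exact absurd (him2.symm.trans him3) (by simp)
      have kB : PosLe G εG x0 .infB := by
        rcases hx with rfl | rfl <;>
          rcases hm1' with rfl|rfl|rfl|rfl <;> rcases hm2' with rfl|rfl|rfl|rfl <;>
          rcases hm3' with rfl|rfl|rfl|rfl <;>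
          first
            | exact k1
            | exact k2
            | exact k3
            | exact absurd (hhx.symm.trans him1) (by simp)
            | exact absurd (hhx.symm.trans him2) (by simp)
            | exact absurd (hhx.symm.trans him3) (by simp)
            | exact absurd (him1.symm.trans him2) (by simp)
            | exact absurd (him1.symm.trans him3) (by simp)
            | exact absurd (him2.symm.trans him3) (by simp)
      rcases le_infA kA with ⟨v, rfl⟩ | ⟨v, rfl⟩ | rfl
      · have hxx : PosLe H εH (.verB w) (h x) := by
          rw [← hx0]; exact hpm.1 _ _ (hverx v)
        rw [hhx] at hxx
        exact absurd (le_infA hxx) (by simp)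
      · exact absurd (le_infB kB) (by simp)
      · exact absurd (le_infB kB) (by simp)
    have hnotB : h x ≠ .infB := by
      intro hhx
      obtain ⟨w⟩ := (inferInstance : Nonempty VH)
      obtain ⟨x0, hx0⟩ := hsurj (.verA w)
      have g1 : PosLe H εH (h x0) .infA := by
        rw [hx0]; exact posle_single (.verA_infA w)
      have g2 : PosLe H εH (h x0) .top1 := by rw [hx0]; exact verA_le_top1 hεH w
      have g3 : PosLe H εH (h x0) .top2 := by rw [hx0]; exact verA_le_top2 hεH w
      obtain ⟨z1, hz1, hz1'⟩ := hpm.2 x0 _ g1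
      obtain ⟨z2, hz2, hz2'⟩ := hpm.2 x0 _ g2
      obtain ⟨z3, hz3, hz3'⟩ := hpm.2 x0 _ g3
      obtain ⟨m1, hm1, hm1'⟩ := to_max (G := G) (ε := εG) z1
      obtain ⟨m2, hm2, hm2'⟩ := to_max (G := G) (ε := εG) z2
      obtain ⟨m3, hm3, hm3'⟩ := to_max (G := G) (ε := εG) z3
      have him1 : h m1 = .infA := by
        have hh := hpm.1 z1 m1 hm1
        rw [hz1'] at hh
        exact infA_max hh
      have him2 : h m2 = .top1 := by
        have hh := hpm.1 z2 m2 hm2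
        rw [hz2'] at hh
        exact top1_max hh
      have him3 : h m3 = .top2 := by
        have hh := hpm.1 z3 m3 hm3
        rw [hz3'] at hh
        exact top2_max hh
      have k1 : PosLe G εG x0 m1 := Relation.ReflTransGen.trans hz1 hm1
      have k2 : PosLe G εG x0 m2 := Relation.ReflTransGen.trans hz2 hm2
      have k3 : PosLe G εG x0 m3 := Relation.ReflTransGen.trans hz3 hm3
      have kA : PosLe G εG x0 .infA := by
        rcases hx with rfl | rfl <;>
          rcases hm1' with rfl|rfl|rfl|rfl <;> rcases hm2' with rfl|rfl|rfl|rfl <;>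
          rcases hm3' with rfl|rfl|rfl|rfl <;>
          first
            | exact k1
            | exact k2
            | exact k3
            | exact absurd (hhx.symm.trans him1) (by simp)
            | exact absurd (hhx.symm.trans him2) (by simp)
            | exact absurd (hhx.symm.trans him3) (by simp)
            | exact absurd (him1.symm.trans him2) (by simp)
            | exact absurd (him1.symm.trans him3) (by simp)
            | exact absurd (him2.symm.trans him3) (by simp)
      have kB : PosLe G εG x0 .infB := by
        rcases hx with rfl | rfl <;>
          rcases hm1' with rfl|rfl|rfl|rfl <;> rcases hm2' with rfl|rfl|rfl|rfl <;>
          rcases hm3' with rfl|rfl|rfl|rfl <;>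
          first
            | exact k1
            | exact k2
            | exact k3
            | exact absurd (hhx.symm.trans him1) (by simp)
            | exact absurd (hhx.symm.trans him2) (by simp)
            | exact absurd (hhx.symm.trans him3) (by simp)
            | exact absurd (him1.symm.trans him2) (by simp)
            | exact absurd (him1.symm.trans him3) (by simp)
            | exact absurd (him2.symm.trans him3) (by simp)
      rcases le_infA kA with ⟨v, rfl⟩ | ⟨v, rfl⟩ | rfl
      · have hxx : PosLe H εH (.verA w) (h x) := by
          rw [← hx0]; exact hpm.1 _ _ (hverx v)
        rw [hhx] at hxx
        exact absurd (le_infB hxx) (by simp)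
      · exact absurd (le_infB kB) (by simp)
      · exact absurd (le_infB kB) (by simp)
    cases h9 : h x with
    | ver w =>
      have hw := hmaxH (.verA w) (by rw [h9]; exact posle_single (.ver_verA w))
      rw [h9] at hw
      exact absurd hw (by simp)
    | verA w =>
      have hw := hmaxH .infA (by rw [h9]; exact posle_single (.verA_infA w))
      rw [h9] at hw
      exact absurd hw (by simp)
    | verB w =>
      have hw := hmaxH .infB (by rw [h9]; exact posle_single (.verB_infB w))
      rw [h9] at hw
      exact absurd hw (by simp)
    | edge1 e =>
      have hw := hmaxH .top1 (by rw [h9]; exact posle_single (.edge1_top1 e))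
      rw [h9] at hw
      exact absurd hw (by simp)
    | edge2 e =>
      have hw := hmaxH .top1 (by rw [h9]; exact posle_single (.edge2_top1 e))
      rw [h9] at hw
      exact absurd hw (by simp)
    | top1 => exact Or.inl rfl
    | top2 => exact Or.inr rfl
    | infA => exact absurd h9 hnotA
    | infB => exact absurd h9 hnotB
  rintro y ⟨x, hx, rfl⟩
  simp only [Set.mem_insert_iff, Set.mem_singleton_iff] at hx ⊢
  exact main x hx
end

section
/- Let G and H be finite simple graphs such that H has at least one vertex, and let h be a surjective p-morphism from Pos(G) onto Pos(H). Then h({⊤₁, ⊤₂}) = {⊤₁, ⊤₂}. -/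
/-!
A p-morphism sends maximal elements to maximal elements, so a surjective one maps the four
maximal elements `⊤₁, ⊤₂, ∞_a, ∞_b` of `Pos(G)` onto those of `Pos(H)`, hence bijectively.
Every non-maximal element of `Pos(G)` lies below both `⊤₁` and `⊤₂`. For a vertex `v` of `H`,
preimages of `v_a` and `v_b` are therefore non-maximal, which gives `v_a ≤ h(⊤ᵢ)` and
`v_b ≤ h(⊤ᵢ)`; as `v_a ≰ ∞_b` and `v_b ≰ ∞_a`, each `h(⊤ᵢ)` is a top, and injectivity on
maximal elements finishes the proof.
-/
def IsRelMax {α : Type} (r : α → α → Prop) (m : α) : Prop :=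
  ∀ z, r m z → z = m

namespace IsPMorphismRel

variable {α β : Type} {r : α → α → Prop} {s : β → β → Prop} {h : α → β}

theorem isRelMax_map (hh : IsPMorphismRel r s h) {m : α} (hm : IsRelMax r m) :
    IsRelMax s (h m) := by
  intro y hy
  obtain ⟨z, hmz, rfl⟩ := hh.2 m y hy
  rw [hm z hmz]

theorem image_setOf_isRelMax (hh : IsPMorphismRel r s h) (hsurj : Function.Surjective h)
    (hr : ∀ x, ∃ m, IsRelMax r m ∧ r x m) :
    h '' {m | IsRelMax r m} = {y | IsRelMax s y} := by
  refine Set.Subset.antisymm (Set.image_subset_iff.2 fun m hm => hh.isRelMax_map hm) ?_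
  intro y hy
  obtain ⟨x, rfl⟩ := hsurj y
  obtain ⟨m, hm, hxm⟩ := hr x
  exact ⟨m, hm, hy _ (hh.1 x m hxm)⟩

end IsPMorphismRel

namespace PosLe

variable {V : Type} {G : SimpleGraph V} {ε : ↥G.edgeSet → V × V}

theorem of_covClosed {S : PosElem V ↥G.edgeSet → Prop}
    (hS : ∀ x y, S x → PosCov G ε x y → S y) {x y : PosElem V ↥G.edgeSet}
    (hx : S x) (hxy : PosLe G ε x y) : S y := by
  induction hxy with
  | refl => exact hx
  | tail _ hcov ih => exact hS _ _ ih hcov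

theorem not_verA_posLe_infB (u : V) : ¬ PosLe G ε (.verA u) .infB := by
  let S : PosElem V ↥G.edgeSet → Prop
    | .ver _ | .verB _ | .infB => False
    | _ => True
  exact fun hle => of_covClosed (S := S) (fun _ _ _ hc => by cases hc <;> trivial) trivial hle

theorem not_verB_posLe_infA (u : V) : ¬ PosLe G ε (.verB u) .infA := by
  let S : PosElem V ↥G.edgeSet → Prop
    | .ver _ | .verA _ | .infA => False
    | _ => True
  exact fun hle => of_covClosed (S := S) (fun _ _ _ hc => by cases hc <;> trivial) trivial hle

theorem isRelMax_iff {x : PosElem V ↥G.edgeSet} :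
    IsRelMax (PosLe G ε) x ↔ x ∈ ({.top1, .top2, .infA, .infB} : Set (PosElem V ↥G.edgeSet)) := by
  constructor
  · intro hx
    have hno_cov : ∀ y, PosCov G ε x y → False := fun y hc => by
      have := hx y (.single hc); subst this; cases hc
    cases x <;> simp only [Set.mem_insert_iff, Set.mem_singleton_iff, reduceCtorEq, or_false,
      or_true]
    exacts [hno_cov _ (.ver_verA _), hno_cov _ (.verA_infA _), hno_cov _ (.verB_infB _),
      hno_cov _ (.edge1_top1 _), hno_cov _ (.edge2_top1 _)]
  · intro hx y hxy
    refine of_covClosed (S := (· = x)) (fun a b ha hc => ?_) rfl hxy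
    subst ha
    rcases hx with rfl | rfl | rfl | rfl <;> cases hc

theorem not_isRelMax_verA {v : V} : ¬ IsRelMax (PosLe G ε) (.verA v) := by
  simp [isRelMax_iff]

theorem not_isRelMax_verB {v : V} : ¬ IsRelMax (PosLe G ε) (.verB v) := by
  simp [isRelMax_iff]

theorem exists_isRelMax (x : PosElem V ↥G.edgeSet) :
    ∃ m, IsRelMax (PosLe G ε) m ∧ PosLe G ε x m := by
  have hmax : ∀ m ∈ ({.top1, .top2, .infA, .infB} : Set (PosElem V ↥G.edgeSet)),
      IsRelMax (PosLe G ε) m := fun m hm => isRelMax_iff.2 hm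
  cases x with
  | ver v => exact ⟨.infA, hmax _ (by simp), .head (.ver_verA v) (.single (.verA_infA v))⟩
  | verA v => exact ⟨.infA, hmax _ (by simp), .single (.verA_infA v)⟩
  | verB v => exact ⟨.infB, hmax _ (by simp), .single (.verB_infB v)⟩
  | edge1 e => exact ⟨.top1, hmax _ (by simp), .single (.edge1_top1 e)⟩
  | edge2 e => exact ⟨.top1, hmax _ (by simp), .single (.edge2_top1 e)⟩
  | _ => exact ⟨_, hmax _ (by simp), .refl⟩

theorem encard_setOf_isRelMax : {x | IsRelMax (PosLe G ε) x}.encard = 4 := by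
  simp only [isRelMax_iff, Set.ofPred_mem_eq]
  rw [Set.encard_insert_of_notMem (by simp), Set.encard_insert_of_notMem (by simp),
    Set.encard_pair (by simp)]
  rfl

theorem edge_posLe_top {t : PosElem V ↥G.edgeSet} (ht : t = .top1 ∨ t = .top2)
    (e : ↥G.edgeSet) : PosLe G ε (.edge1 e) t ∧ PosLe G ε (.edge2 e) t := by
  rcases ht with rfl | rfl
  exacts [⟨.single (.edge1_top1 e), .single (.edge2_top1 e)⟩,
    ⟨.single (.edge1_top2 e), .single (.edge2_top2 e)⟩]

theorem verA_posLe_top_and_verB_posLe_top (hε : OrientOK G ε) {t : PosElem V ↥G.edgeSet}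
    (ht : t = .top1 ∨ t = .top2) (v : V) :
    PosLe G ε (.verA v) t ∧ PosLe G ε (.verB v) t := by
  by_cases hiso : ∀ w, ¬ G.Adj v w
  · rcases ht with rfl | rfl
    exacts [⟨.single (.isolA_top1 v hiso), .single (.isolB_top1 v hiso)⟩,
      ⟨.single (.isolA_top2 v hiso), .single (.isolB_top2 v hiso)⟩]
  obtain ⟨w, hw⟩ := not_forall_not.1 hiso
  let e : ↥G.edgeSet := ⟨s(v, w), hw⟩
  obtain ⟨h1, h2⟩ := edge_posLe_top (ε := ε) ht e
  rcases Sym2.eq_iff.1 (hε e) with ⟨hv, -⟩ | ⟨hv, -⟩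
  · exact ⟨.head (hv ▸ .ua_edge1 e) h1, .head (hv ▸ .ub_edge2 e) h2⟩
  · exact ⟨.head (hv ▸ .va_edge2 e) h2, .head (hv ▸ .vb_edge1 e) h1⟩

theorem posLe_top_of_not_isRelMax (hε : OrientOK G ε) {t x : PosElem V ↥G.edgeSet}
    (ht : t = .top1 ∨ t = .top2) (hx : ¬ IsRelMax (PosLe G ε) x) : PosLe G ε x t := by
  have hcopies := verA_posLe_top_and_verB_posLe_top hε ht
  cases x with
  | ver v => exact .head (.ver_verA v) (hcopies v).1
  | verA v => exact (hcopies v).1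
  | verB v => exact (hcopies v).2
  | edge1 e => exact (edge_posLe_top ht e).1
  | edge2 e => exact (edge_posLe_top ht e).2
  | _ => exact absurd (isRelMax_iff.2 (by simp)) hx

end PosLe

section PMorphism

variable {VG VH : Type} {G : SimpleGraph VG} {H : SimpleGraph VH}
  {εG : ↥G.edgeSet → VG × VG} {εH : ↥H.edgeSet → VH × VH}
  {h : PosElem VG ↥G.edgeSet → PosElem VH ↥H.edgeSet}

theorem injOn_setOf_isRelMax_posLe (hpm : IsPMorphismRel (PosLe G εG) (PosLe H εH) h)
    (hsurj : Function.Surjective h) : Set.InjOn h {m | IsRelMax (PosLe G εG) m} := by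
  refine Set.Finite.injOn_of_encard_image_eq
    (Set.finite_of_encard_eq_coe PosLe.encard_setOf_isRelMax) ?_
  rw [hpm.image_setOf_isRelMax hsurj PosLe.exists_isRelMax, PosLe.encard_setOf_isRelMax,
    PosLe.encard_setOf_isRelMax]

theorem posLe_map_top_of_not_isRelMax (hεG : OrientOK G εG)
    (hpm : IsPMorphismRel (PosLe G εG) (PosLe H εH) h) (hsurj : Function.Surjective h)
    {t : PosElem VG ↥G.edgeSet} (ht : t = .top1 ∨ t = .top2) (y : PosElem VH ↥H.edgeSet)
    (hy : ¬ IsRelMax (PosLe H εH) y) : PosLe H εH y (h t) := by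
  obtain ⟨x, rfl⟩ := hsurj y
  exact hpm.1 _ _ (PosLe.posLe_top_of_not_isRelMax hεG ht fun hx => hy (hpm.isRelMax_map hx))

theorem map_top_eq_top [Nonempty VH] (hεG : OrientOK G εG)
    (hpm : IsPMorphismRel (PosLe G εG) (PosLe H εH) h) (hsurj : Function.Surjective h)
    {t : PosElem VG ↥G.edgeSet} (ht : t = .top1 ∨ t = .top2) :
    h t = .top1 ∨ h t = .top2 := by
  obtain ⟨v⟩ := ‹Nonempty VH›
  have hmax : IsRelMax (PosLe G εG) t :=
    PosLe.isRelMax_iff.2 (by rcases ht with rfl | rfl <;> simp)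
  have hbelow := posLe_map_top_of_not_isRelMax hεG hpm hsurj ht
  rcases PosLe.isRelMax_iff.1 (hpm.isRelMax_map hmax) with ht' | ht' | ht' | ht'
  · exact .inl ht'
  · exact .inr ht'
  · exact absurd (ht' ▸ hbelow _ PosLe.not_isRelMax_verB) (PosLe.not_verB_posLe_infA v)
  · exact absurd (ht' ▸ hbelow _ PosLe.not_isRelMax_verA) (PosLe.not_verA_posLe_infB v)

end PMorphism

theorem top_maps_onto_top_general {VG VH : Type} [Nonempty VH]
    (G : SimpleGraph VG) (H : SimpleGraph VH)
    (εG : ↥G.edgeSet → VG × VG) (hεG : OrientOK G εG)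
    (εH : ↥H.edgeSet → VH × VH)
    (h : PosElem VG ↥G.edgeSet → PosElem VH ↥H.edgeSet)
    (hsurj : Function.Surjective h)
    (hpm : IsPMorphismRel (PosLe G εG) (PosLe H εH) h) :
    h '' {PosElem.top1, PosElem.top2} = {PosElem.top1, PosElem.top2} := by
  have h1 := map_top_eq_top hεG hpm hsurj (t := .top1) (.inl rfl)
  have h2 := map_top_eq_top hεG hpm hsurj (t := .top2) (.inr rfl)
  have hne : h .top1 ≠ h .top2 := (injOn_setOf_isRelMax_posLe hpm hsurj).ne
    (PosLe.isRelMax_iff.2 (by simp)) (PosLe.isRelMax_iff.2 (by simp)) (by simp)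
  rw [Set.image_pair]
  rcases h1 with h1 | h1 <;> rcases h2 with h2 | h2 <;> simp_all [Set.pair_comm]

theorem top_maps_onto_top {VG VH : Type} [Fintype VG] [Fintype VH] [Nonempty VH]
    (G : SimpleGraph VG) (H : SimpleGraph VH)
    (εG : ↥G.edgeSet → VG × VG) (hεG : OrientOK G εG)
    (εH : ↥H.edgeSet → VH × VH) (hεH : OrientOK H εH)
    (h : PosElem VG ↥G.edgeSet → PosElem VH ↥H.edgeSet)
    (hsurj : Function.Surjective h)
    (hpm : IsPMorphismRel (PosLe G εG) (PosLe H εH) h) :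
    h '' {PosElem.top1, PosElem.top2} = {PosElem.top1, PosElem.top2} :=
  top_maps_onto_top_general G H εG hεG εH h hsurj hpm
end

section
/- Let G and H be finite simple graphs such that H has at least one vertex, and let h be a surjective p-morphism from Pos(G) onto Pos(H). Then h(E_1^G ∪ E_2^G) ⊆ E_1^H ∪ E_2^H, i.e., every edge-copy element of Pos(G) is mapped by h to an edge-copy element of Pos(H). -/
/-!
Under a p-morphism the up-set of `h x` is the image of the up-set of `x`; for an edge copy `x`
that is `{x, ⊤₁, ⊤₂}`, so at most three elements lie above `h x`, among them `h ⊤₁` and `h ⊤₂`.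
These two differ: by surjectivity and monotonicity each of the four maximal elements of `Pos(H)`
is the image of one of the four maximal elements of `Pos(G)`. Hence `h x` is not maximal, and in
`Pos(H)` every non-maximal element other than an edge copy has at least four elements above it:
`v ≤ v_a, v_b, ∞_a` and `v_a ≤ ∞_a, ⊤₁, ⊤₂` (through an edge at `v`, or directly if `v` is
isolated).
-/

theorem Set.encard_eq_four_of_notMem {α : Type*} {a b c d : α} (ha : a ∉ ({b, c, d} : Set α))
    (hb : b ∉ ({c, d} : Set α)) (hcd : c ≠ d) : ({a, b, c, d} : Set α).encard = 4 := by
  rw [Set.encard_insert_of_notMem ha, Set.encard_insert_of_notMem hb, Set.encard_pair hcd]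
  rfl

theorem Set.encard_triple_le {α : Type*} (a b c : α) : ({a, b, c} : Set α).encard ≤ 3 :=
  calc ({a, b, c} : Set α).encard ≤ ({b, c} : Set α).encard + 1 := Set.encard_insert_le _ _
    _ ≤ ({c} : Set α).encard + 1 + 1 := by gcongr; exact Set.encard_insert_le _ _
    _ = 3 := by rw [Set.encard_singleton]; norm_num

theorem IsPMorphismRel.image_setOf_le {α β : Type} {leP : α → α → Prop} {leQ : β → β → Prop}
    {h : α → β} (hh : IsPMorphismRel leP leQ h) (x : α) :
    h '' {z | leP x z} = {y | leQ (h x) y} :=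
  Set.ext fun y ↦ ⟨by rintro ⟨z, hxz, rfl⟩; exact hh.1 x z hxz, hh.2 x y⟩

namespace PosElem

variable {V E : Type}

def maxElems : Set (PosElem V E) := {top1, top2, infA, infB}

def IsEdge (x : PosElem V E) : Prop := ∃ e, x = edge1 e ∨ x = edge2 e

theorem encard_maxElems : (maxElems : Set (PosElem V E)).encard = 4 :=
  Set.encard_eq_four_of_notMem (by simp) (by simp) (by simp)

end PosElem

open PosElem

section PosLe

variable {V : Type} {G : SimpleGraph V} {ε : ↥G.edgeSet → V × V}

theorem PosLe.eq_of_mem_maxElems {m y : PosElem V G.edgeSet} (hle : PosLe G ε m y)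
    (hm : m ∈ maxElems) : y = m := by
  induction hle with
  | refl => rfl
  | tail _ hcov ih =>
    subst ih
    rcases hm with rfl | rfl | rfl | rfl <;> cases hcov

theorem exists_mem_maxElems_posLe (x : PosElem V G.edgeSet) :
    ∃ m ∈ maxElems, PosLe G ε x m := by
  cases x with
  | ver v => exact ⟨infA, by simp [maxElems], .head (.ver_verA v) (.single (.verA_infA v))⟩
  | verA v => exact ⟨infA, by simp [maxElems], .single (.verA_infA v)⟩
  | verB v => exact ⟨infB, by simp [maxElems], .single (.verB_infB v)⟩
  | edge1 e => exact ⟨top1, by simp [maxElems], .single (.edge1_top1 e)⟩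
  | edge2 e => exact ⟨top1, by simp [maxElems], .single (.edge2_top1 e)⟩
  | top1 => exact ⟨top1, by simp [maxElems], .refl⟩
  | top2 => exact ⟨top2, by simp [maxElems], .refl⟩
  | infA => exact ⟨infA, by simp [maxElems], .refl⟩
  | infB => exact ⟨infB, by simp [maxElems], .refl⟩

theorem posLe_top_of_isEdge {x t : PosElem V G.edgeSet} (hx : x.IsEdge)
    (ht : t = top1 ∨ t = top2) : PosLe G ε x t := by
  obtain ⟨e, rfl | rfl⟩ := hx <;> rcases ht with rfl | rfl
  exacts [.single (.edge1_top1 e), .single (.edge1_top2 e), .single (.edge2_top1 e),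
    .single (.edge2_top2 e)]

theorem setOf_posLe_of_isEdge {x : PosElem V G.edgeSet} (hx : x.IsEdge) :
    {y | PosLe G ε x y} = {x, top1, top2} := by
  refine Set.Subset.antisymm (fun y hy ↦ ?_) ?_
  · induction hy with
    | refl => exact .inl rfl
    | tail _ hcov ih =>
      obtain ⟨e, rfl | rfl⟩ := hx <;> rcases ih with rfl | rfl | rfl <;> cases hcov <;> simp
  · simp only [Set.insert_subset_iff, Set.singleton_subset_iff, Set.mem_ofPred_eq]
    exact ⟨.refl, posLe_top_of_isEdge hx (.inl rfl), posLe_top_of_isEdge hx (.inr rfl)⟩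

theorem exists_endpoint_eq_of_adj (hε : OrientOK G ε) {v w : V} (hvw : G.Adj v w) :
    ∃ e : G.edgeSet, (ε e).1 = v ∨ (ε e).2 = v := by
  refine ⟨⟨s(v, w), hvw⟩, ?_⟩
  have := hε ⟨s(v, w), hvw⟩
  simp only [Sym2.eq_iff] at this
  tauto

theorem verA_posLe_top (hε : OrientOK G ε) (v : V) {t : PosElem V G.edgeSet}
    (ht : t = top1 ∨ t = top2) : PosLe G ε (verA v) t := by
  by_cases hv : ∀ w, ¬ G.Adj v w
  · rcases ht with rfl | rfl
    exacts [.single (.isolA_top1 v hv), .single (.isolA_top2 v hv)]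
  · obtain ⟨w, hvw⟩ := not_forall_not.1 hv
    obtain ⟨e, rfl | rfl⟩ := exists_endpoint_eq_of_adj hε hvw
    · exact .head (.ua_edge1 e) (posLe_top_of_isEdge ⟨e, .inl rfl⟩ ht)
    · exact .head (.va_edge2 e) (posLe_top_of_isEdge ⟨e, .inr rfl⟩ ht)

theorem verB_posLe_top (hε : OrientOK G ε) (v : V) {t : PosElem V G.edgeSet}
    (ht : t = top1 ∨ t = top2) : PosLe G ε (verB v) t := by
  by_cases hv : ∀ w, ¬ G.Adj v w
  · rcases ht with rfl | rfl
    exacts [.single (.isolB_top1 v hv), .single (.isolB_top2 v hv)]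
  · obtain ⟨w, hvw⟩ := not_forall_not.1 hv
    obtain ⟨e, rfl | rfl⟩ := exists_endpoint_eq_of_adj hε hvw
    · exact .head (.ub_edge2 e) (posLe_top_of_isEdge ⟨e, .inr rfl⟩ ht)
    · exact .head (.vb_edge1 e) (posLe_top_of_isEdge ⟨e, .inl rfl⟩ ht)

theorem four_le_encard_setOf_posLe (hε : OrientOK G ε) {y : PosElem V G.edgeSet}
    (hy : y ∉ maxElems) (hne : ¬ y.IsEdge) : 4 ≤ {z | PosLe G ε y z}.encard := by
  obtain ⟨s, hs, hsub⟩ :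
      ∃ s : Set (PosElem V G.edgeSet), s.encard = 4 ∧ s ⊆ {z | PosLe G ε y z} := by
    cases y with
    | ver v =>
      refine ⟨{ver v, verA v, verB v, infA}, ?_, ?_⟩
      · exact Set.encard_eq_four_of_notMem (by simp) (by simp) (by simp)
      · simp only [Set.insert_subset_iff, Set.singleton_subset_iff, Set.mem_ofPred_eq]
        exact ⟨.refl, .single (.ver_verA v), .single (.ver_verB v),
          .head (.ver_verA v) (.single (.verA_infA v))⟩
    | verA v =>
      refine ⟨{verA v, infA, top1, top2}, ?_, ?_⟩
      · exact Set.encard_eq_four_of_notMem (by simp) (by simp) (by simp)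
      · simp only [Set.insert_subset_iff, Set.singleton_subset_iff, Set.mem_ofPred_eq]
        exact ⟨.refl, .single (.verA_infA v), verA_posLe_top hε v (.inl rfl),
          verA_posLe_top hε v (.inr rfl)⟩
    | verB v =>
      refine ⟨{verB v, infB, top1, top2}, ?_, ?_⟩
      · exact Set.encard_eq_four_of_notMem (by simp) (by simp) (by simp)
      · simp only [Set.insert_subset_iff, Set.singleton_subset_iff, Set.mem_ofPred_eq]
        exact ⟨.refl, .single (.verB_infB v), verB_posLe_top hε v (.inl rfl),
          verB_posLe_top hε v (.inr rfl)⟩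
    | edge1 e => exact absurd ⟨e, .inl rfl⟩ hne
    | edge2 e => exact absurd ⟨e, .inr rfl⟩ hne
    | _ => simp [maxElems] at hy
  exact hs ▸ Set.encard_le_encard hsub

theorem isEdge_of_setOf_posLe_subset (hε : OrientOK G ε) {y a b : PosElem V G.edgeSet}
    (hya : PosLe G ε y a) (hyb : PosLe G ε y b) (hab : a ≠ b)
    (hup : {z | PosLe G ε y z} ⊆ {y, a, b}) : y.IsEdge := by
  by_cases hy : y ∈ maxElems
  · exact absurd ((hya.eq_of_mem_maxElems hy).trans (hyb.eq_of_mem_maxElems hy).symm) hab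
  by_contra hne
  have := (four_le_encard_setOf_posLe hε hy hne).trans
    ((Set.encard_le_encard hup).trans (Set.encard_triple_le y a b))
  norm_num at this

end PosLe

section PMorphism

variable {VG VH : Type} {G : SimpleGraph VG} {H : SimpleGraph VH}
  {εG : ↥G.edgeSet → VG × VG} {εH : ↥H.edgeSet → VH × VH}
  {h : PosElem VG G.edgeSet → PosElem VH H.edgeSet}

theorem maxElems_subset_image_maxElems (hsurj : Function.Surjective h)
    (hmono : ∀ x y, PosLe G εG x y → PosLe H εH (h x) (h y)) : maxElems ⊆ h '' maxElems := by
  intro m hm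
  obtain ⟨x, rfl⟩ := hsurj m
  obtain ⟨t, ht, hxt⟩ := exists_mem_maxElems_posLe (ε := εG) x
  exact ⟨t, ht, (hmono x t hxt).eq_of_mem_maxElems hm⟩

theorem map_top1_ne_map_top2 (hsurj : Function.Surjective h)
    (hmono : ∀ x y, PosLe G εG x y → PosLe H εH (h x) (h y)) : h top1 ≠ h top2 := by
  intro heq
  have hsub : maxElems ⊆ h '' {top2, infA, infB} := by
    simpa [maxElems, Set.image_insert_eq, heq] using maxElems_subset_image_maxElems hsurj hmono
  have := encard_maxElems.symm.le.trans ((Set.encard_le_encard hsub).trans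
    ((Set.encard_image_le h _).trans (Set.encard_triple_le _ _ _)))
  norm_num at this

end PMorphism

theorem edges_map_into_edges_general {VG VH : Type}
    (G : SimpleGraph VG) (H : SimpleGraph VH)
    (εG : ↥G.edgeSet → VG × VG)
    (εH : ↥H.edgeSet → VH × VH) (hεH : OrientOK H εH)
    (h : PosElem VG ↥G.edgeSet → PosElem VH ↥H.edgeSet)
    (hsurj : Function.Surjective h)
    (hpm : IsPMorphismRel (PosLe G εG) (PosLe H εH) h) :
    ∀ x : PosElem VG ↥G.edgeSet,
      (∃ e : ↥G.edgeSet, x = PosElem.edge1 e ∨ x = PosElem.edge2 e) →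
      ∃ f : ↥H.edgeSet, h x = PosElem.edge1 f ∨ h x = PosElem.edge2 f := by
  intro x hx
  have hup : {y | PosLe H εH (h x) y} = {h x, h top1, h top2} := by
    rw [← hpm.image_setOf_le, setOf_posLe_of_isEdge hx, Set.image_insert_eq,
      Set.image_insert_eq, Set.image_singleton]
  exact isEdge_of_setOf_posLe_subset hεH (hpm.1 _ _ (posLe_top_of_isEdge hx (.inl rfl)))
    (hpm.1 _ _ (posLe_top_of_isEdge hx (.inr rfl))) (map_top1_ne_map_top2 hsurj hpm.1) hup.subset

theorem edges_map_into_edges {VG VH : Type} [Fintype VG] [Fintype VH] [Nonempty VH]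
    (G : SimpleGraph VG) (H : SimpleGraph VH)
    (εG : ↥G.edgeSet → VG × VG) (hεG : OrientOK G εG)
    (εH : ↥H.edgeSet → VH × VH) (hεH : OrientOK H εH)
    (h : PosElem VG ↥G.edgeSet → PosElem VH ↥H.edgeSet)
    (hsurj : Function.Surjective h)
    (hpm : IsPMorphismRel (PosLe G εG) (PosLe H εH) h) :
    ∀ x : PosElem VG ↥G.edgeSet,
      (∃ e : ↥G.edgeSet, x = PosElem.edge1 e ∨ x = PosElem.edge2 e) →
      ∃ f : ↥H.edgeSet, h x = PosElem.edge1 f ∨ h x = PosElem.edge2 f :=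
  edges_map_into_edges_general G H εG εH hεH h hsurj hpm
end

section
/- Let G and H be finite simple graphs such that H has at least one vertex, and let h be a surjective p-morphism from Pos(G) onto Pos(H). If h(∞_a) = ∞_a then h(V_a^G) ⊆ V_a^H and h(V_b^G) ⊆ V_b^H; if h(∞_a) = ∞_b then h(V_a^G) ⊆ V_b^H and h(V_b^G) ⊆ V_a^H. -/
/-!
A p-morphism sends maximal elements to maximal elements and maps the set of maxima above `x`
onto the set of maxima above `h x`. Since `h` is onto, it is therefore a bijection between the
four maxima `∞_a, ∞_b, ⊤₁, ⊤₂` of `Pos(G)` and those of `Pos(H)`, so it preserves the number of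
maxima above each element. A vertex copy lies below exactly three maxima, and in `Pos(H)` the
elements below exactly three maxima are the vertex copies: `⊤₁` and `⊤₂` have the same strict
lower set, so a vertex `w` lies below two or four maxima. Finally, injectivity on maxima gives
`h(x) ≤ h(∞_a) ↔ x ≤ ∞_a`, which tells `h(v_a)` and `h(v_b)` apart.
-/

open Relation Finset PosElem

namespace IsPMorphismRel

variable {α β : Type} {leP : α → α → Prop} {leQ : β → β → Prop} {h : α → β}

theorem map_maximal (hpm : IsPMorphismRel leP leQ h) {m : α} (hm : ∀ z, leP m z → z = m) :
    ∀ y, leQ (h m) y → y = h m := by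
  intro y hy
  obtain ⟨z, hz, rfl⟩ := hpm.2 m y hy
  rw [hm z hz]

theorem exists_maximal_map_eq [IsTrans α leP] (hpm : IsPMorphismRel leP leQ h)
    (hbounded : ∀ x, ∃ m, leP x m ∧ ∀ z, leP m z → z = m)
    {x : α} {y : β} (hxy : leQ (h x) y) (hy : ∀ z, leQ y z → z = y) :
    ∃ m, leP x m ∧ (∀ z, leP m z → z = m) ∧ h m = y := by
  obtain ⟨z, hxz, rfl⟩ := hpm.2 x y hxy
  obtain ⟨m, hzm, hm⟩ := hbounded z
  exact ⟨m, _root_.trans_of leP hxz hzm, hm, hy _ (hpm.1 z m hzm)⟩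

end IsPMorphismRel

namespace PosElem

open scoped Classical

noncomputable def maxima {V E : Type} : Finset (PosElem V E) := {infA, infB, top1, top2}

noncomputable def maxAbove {V : Type} (G : SimpleGraph V) (ε : G.edgeSet → V × V)
    (x : PosElem V G.edgeSet) : Finset (PosElem V G.edgeSet) :=
  maxima.filter (PosLe G ε x)

theorem card_maxima {V E : Type} : #(maxima : Finset (PosElem V E)) = 4 := by
  simp [maxima]

variable {V : Type} {G : SimpleGraph V} {ε : G.edgeSet → V × V} {x y : PosElem V G.edgeSet}

instance : IsTrans (PosElem V G.edgeSet) (PosLe G ε) := ⟨fun _ _ _ => ReflTransGen.trans⟩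

theorem eq_of_posLe_of_mem_maxima (hx : x ∈ maxima) (hxy : PosLe G ε x y) : y = x := by
  rcases hxy.cases_head with rfl | ⟨c, hc, -⟩
  · rfl
  · simp only [maxima, mem_insert, mem_singleton] at hx
    rcases hx with rfl | rfl | rfl | rfl <;> cases hc

theorem exists_mem_maxima_posLe (x : PosElem V G.edgeSet) : ∃ m ∈ maxima, PosLe G ε x m := by
  cases x with
  | ver v => exact ⟨infA, by simp [maxima], .tail (.single (.ver_verA v)) (.verA_infA v)⟩
  | verA v => exact ⟨infA, by simp [maxima], .single (.verA_infA v)⟩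
  | verB v => exact ⟨infB, by simp [maxima], .single (.verB_infB v)⟩
  | edge1 e => exact ⟨top1, by simp [maxima], .single (.edge1_top1 e)⟩
  | edge2 e => exact ⟨top1, by simp [maxima], .single (.edge2_top1 e)⟩
  | top1 | top2 | infA | infB => exact ⟨_, by simp [maxima], .refl⟩

theorem mem_maxima_iff : x ∈ maxima ↔ ∀ y, PosLe G ε x y → y = x := by
  refine ⟨fun hx _ => eq_of_posLe_of_mem_maxima hx, fun hx => ?_⟩
  obtain ⟨m, hm, hxm⟩ := exists_mem_maxima_posLe (ε := ε) x
  rwa [← hx m hxm]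

theorem eq_of_posLe_infA (hx : PosLe G ε x infA) :
    x = infA ∨ ∃ v, x = verA v ∨ x = ver v := by
  induction hx using ReflTransGen.head_induction_on with
  | refl => exact .inl rfl
  | head hc _ ih => cases hc <;> simp_all

theorem eq_of_posLe_infB (hx : PosLe G ε x infB) :
    x = infB ∨ ∃ v, x = verB v ∨ x = ver v := by
  induction hx using ReflTransGen.head_induction_on with
  | refl => exact .inl rfl
  | head hc _ ih => cases hc <;> simp_all

theorem not_verB_posLe_infA (v : V) : ¬ PosLe G ε (verB v) infA := by
  intro hv
  simpa using eq_of_posLe_infA hv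

theorem not_verA_posLe_infB (v : V) : ¬ PosLe G ε (verA v) infB := by
  intro hv
  simpa using eq_of_posLe_infB hv

theorem posCov_top2_of_posCov_top1 (hx : PosCov G ε x top1) : PosCov G ε x top2 := by
  cases hx with
  | edge1_top1 e => exact .edge1_top2 e
  | edge2_top1 e => exact .edge2_top2 e
  | isolA_top1 v hv => exact .isolA_top2 v hv
  | isolB_top1 v hv => exact .isolB_top2 v hv

theorem posCov_top1_of_posCov_top2 (hx : PosCov G ε x top2) : PosCov G ε x top1 := by
  cases hx with
  | edge1_top2 e => exact .edge1_top1 e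
  | edge2_top2 e => exact .edge2_top1 e
  | isolA_top2 v hv => exact .isolA_top1 v hv
  | isolB_top2 v hv => exact .isolB_top1 v hv

theorem posLe_top1_iff_posLe_top2 (h1 : x ≠ top1) (h2 : x ≠ top2) :
    PosLe G ε x top1 ↔ PosLe G ε x top2 := by
  constructor <;> intro hx <;> rcases hx.cases_tail with rfl | ⟨c, hxc, hc⟩
  all_goals first
    | contradiction
    | exact hxc.tail (posCov_top2_of_posCov_top1 hc)
    | exact hxc.tail (posCov_top1_of_posCov_top2 hc)

theorem vertexCopies_posLe_top1 (hε : OrientOK G ε) (v : V) :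
    PosLe G ε (verA v) top1 ∧ PosLe G ε (verB v) top1 := by
  by_cases hv : ∃ w, G.Adj v w
  swap
  · exact ⟨.single (.isolA_top1 v (not_exists.1 hv)), .single (.isolB_top1 v (not_exists.1 hv))⟩
  obtain ⟨w, hw⟩ := hv
  let e : G.edgeSet := ⟨s(v, w), hw⟩
  rcases Sym2.eq_iff.1 (hε e) with ⟨h1, -⟩ | ⟨h2, -⟩
  · rw [h1]
    exact ⟨.tail (.single (.ua_edge1 e)) (.edge1_top1 e),
      .tail (.single (.ub_edge2 e)) (.edge2_top1 e)⟩
  · rw [h2]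
    exact ⟨.tail (.single (.va_edge2 e)) (.edge2_top1 e),
      .tail (.single (.vb_edge1 e)) (.edge1_top1 e)⟩

theorem card_maxAbove_verA (hε : OrientOK G ε) (v : V) : #(maxAbove G ε (verA v)) = 3 := by
  have h1 := (vertexCopies_posLe_top1 hε v).1
  have h2 := (posLe_top1_iff_posLe_top2 (by simp) (by simp)).1 h1
  have h0 : PosLe G ε (verA v) infA := .single (.verA_infA v)
  simp [maxAbove, maxima, filter_insert, filter_singleton, h0, h1, h2, not_verA_posLe_infB]

theorem card_maxAbove_verB (hε : OrientOK G ε) (v : V) : #(maxAbove G ε (verB v)) = 3 := by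
  have h1 := (vertexCopies_posLe_top1 hε v).2
  have h2 := (posLe_top1_iff_posLe_top2 (by simp) (by simp)).1 h1
  have h0 : PosLe G ε (verB v) infB := .single (.verB_infB v)
  simp [maxAbove, maxima, filter_insert, filter_singleton, h0, h1, h2, not_verB_posLe_infA]

theorem maxAbove_subset_maxima : maxAbove G ε x ⊆ maxima := filter_subset _ _

theorem maxAbove_of_mem_maxima (hx : x ∈ maxima) : maxAbove G ε x = {x} := by
  ext m
  simp only [maxAbove, mem_filter, mem_singleton]
  exact ⟨fun ⟨_, hxm⟩ => eq_of_posLe_of_mem_maxima hx hxm, by rintro rfl; exact ⟨hx, .refl⟩⟩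

theorem card_maxAbove_le_two (hA : ¬ PosLe G ε y infA) (hB : ¬ PosLe G ε y infB) :
    #(maxAbove G ε y) ≤ 2 := by
  calc #(maxAbove G ε y) ≤ #({top1, top2} : Finset (PosElem V G.edgeSet)) := by
        refine card_le_card fun m hm => ?_
        simp only [maxAbove, maxima, mem_filter, mem_insert, mem_singleton] at hm
        rcases hm with ⟨rfl | rfl | rfl | rfl, hym⟩ <;> simp_all
    _ ≤ 2 := card_le_two

theorem exists_eq_verA_or_eq_verB_of_card_maxAbove (hy : #(maxAbove G ε y) = 3) :
    ∃ w, y = verA w ∨ y = verB w := by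
  cases y with
  | verA w | verB w => exact ⟨w, by simp⟩
  | ver w =>
    have hwA : PosLe G ε (ver w) infA := .tail (.single (.ver_verA w)) (.verA_infA w)
    have hwB : PosLe G ε (ver w) infB := .tail (.single (.ver_verB w)) (.verB_infB w)
    have htop := posLe_top1_iff_posLe_top2 (G := G) (ε := ε) (x := ver w) (by simp) (by simp)
    by_cases ht : PosLe G ε (ver w) top1 <;>
      simp [maxAbove, maxima, filter_insert, filter_singleton, hwA, hwB, ht, ← htop] at hy
  | edge1 e | edge2 e =>
    have := hy ▸ card_maxAbove_le_two (fun h => by simpa using eq_of_posLe_infA h)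
      (fun h => by simpa using eq_of_posLe_infB h)
    omega
  | top1 | top2 | infA | infB =>
    rw [maxAbove_of_mem_maxima (by simp [maxima])] at hy
    simp at hy

end PosElem

namespace IsPMorphismRel

open scoped Classical

variable {VG VH : Type} {G : SimpleGraph VG} {H : SimpleGraph VH}
  {εG : G.edgeSet → VG × VG} {εH : H.edgeSet → VH × VH}
  {h : PosElem VG G.edgeSet → PosElem VH H.edgeSet}

theorem map_mem_maxima (hpm : IsPMorphismRel (PosLe G εG) (PosLe H εH) h)
    {m : PosElem VG G.edgeSet} (hm : m ∈ maxima) : h m ∈ maxima :=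
  mem_maxima_iff.2 (hpm.map_maximal (mem_maxima_iff.1 hm))

theorem exists_mem_maxima_map_eq (hpm : IsPMorphismRel (PosLe G εG) (PosLe H εH) h)
    {x : PosElem VG G.edgeSet} {y : PosElem VH H.edgeSet} (hxy : PosLe H εH (h x) y)
    (hy : y ∈ maxima) : ∃ m ∈ maxima, PosLe G εG x m ∧ h m = y := by
  have hbounded (z : PosElem VG G.edgeSet) :
      ∃ m, PosLe G εG z m ∧ ∀ z', PosLe G εG m z' → z' = m := by
    obtain ⟨m, hm, hzm⟩ := exists_mem_maxima_posLe (ε := εG) z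
    exact ⟨m, hzm, mem_maxima_iff.1 hm⟩
  obtain ⟨m, hxm, hm, rfl⟩ := hpm.exists_maximal_map_eq hbounded hxy (mem_maxima_iff.1 hy)
  exact ⟨m, mem_maxima_iff.2 hm, hxm, rfl⟩

theorem image_maxAbove (hpm : IsPMorphismRel (PosLe G εG) (PosLe H εH) h)
    (x : PosElem VG G.edgeSet) : (maxAbove G εG x).image h = maxAbove H εH (h x) := by
  ext y
  simp only [maxAbove, mem_image, mem_filter]
  constructor
  · rintro ⟨m, ⟨hm, hxm⟩, rfl⟩
    exact ⟨hpm.map_mem_maxima hm, hpm.1 _ _ hxm⟩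
  · rintro ⟨hy, hxy⟩
    obtain ⟨m, hm, hxm, rfl⟩ := hpm.exists_mem_maxima_map_eq hxy hy
    exact ⟨m, ⟨hm, hxm⟩, rfl⟩

theorem image_maxima (hpm : IsPMorphismRel (PosLe G εG) (PosLe H εH) h)
    (hsurj : Function.Surjective h) : maxima.image h = maxima := by
  refine Subset.antisymm (fun y hy => ?_) (fun y hy => ?_)
  · obtain ⟨m, hm, rfl⟩ := mem_image.1 hy
    exact hpm.map_mem_maxima hm
  · obtain ⟨x, rfl⟩ := hsurj y
    obtain ⟨m, hm, -, hmx⟩ := hpm.exists_mem_maxima_map_eq .refl hy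
    exact mem_image.2 ⟨m, hm, hmx⟩

theorem injOn_maxima (hpm : IsPMorphismRel (PosLe G εG) (PosLe H εH) h)
    (hsurj : Function.Surjective h) : Set.InjOn h (maxima : Finset (PosElem VG G.edgeSet)) :=
  card_image_iff.1 (by rw [hpm.image_maxima hsurj, card_maxima, card_maxima])

theorem card_maxAbove_map (hpm : IsPMorphismRel (PosLe G εG) (PosLe H εH) h)
    (hsurj : Function.Surjective h) (x : PosElem VG G.edgeSet) :
    #(maxAbove H εH (h x)) = #(maxAbove G εG x) := by
  rw [← hpm.image_maxAbove,
    card_image_of_injOn ((hpm.injOn_maxima hsurj).mono (coe_subset.2 maxAbove_subset_maxima))]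

theorem posLe_map_iff (hpm : IsPMorphismRel (PosLe G εG) (PosLe H εH) h)
    (hsurj : Function.Surjective h) {x m : PosElem VG G.edgeSet} (hm : m ∈ maxima) :
    PosLe H εH (h x) (h m) ↔ PosLe G εG x m := by
  refine ⟨fun hle => ?_, hpm.1 x m⟩
  obtain ⟨m', hm', hxm', hmm'⟩ := hpm.exists_mem_maxima_map_eq hle (hpm.map_mem_maxima hm)
  rwa [← hpm.injOn_maxima hsurj hm' hm hmm']

end IsPMorphismRel

theorem vertexCopies_map_into_vertexCopies_general {VG VH : Type}
    (G : SimpleGraph VG) (H : SimpleGraph VH)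
    (εG : ↥G.edgeSet → VG × VG) (hεG : OrientOK G εG)
    (εH : ↥H.edgeSet → VH × VH)
    (h : PosElem VG ↥G.edgeSet → PosElem VH ↥H.edgeSet)
    (hsurj : Function.Surjective h)
    (hpm : IsPMorphismRel (PosLe G εG) (PosLe H εH) h) :
    (h PosElem.infA = PosElem.infA →
      (∀ v : VG, ∃ w : VH, h (PosElem.verA v) = PosElem.verA w) ∧
      (∀ v : VG, ∃ w : VH, h (PosElem.verB v) = PosElem.verB w)) ∧
    (h PosElem.infA = PosElem.infB →
      (∀ v : VG, ∃ w : VH, h (PosElem.verA v) = PosElem.verB w) ∧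
      (∀ v : VG, ∃ w : VH, h (PosElem.verB v) = PosElem.verA w)) := by
  have hcopy (x : PosElem VG G.edgeSet) (hx : #(maxAbove G εG x) = 3) :
      ∃ w, h x = verA w ∨ h x = verB w :=
    exists_eq_verA_or_eq_verB_of_card_maxAbove ((hpm.card_maxAbove_map hsurj x).trans hx)
  have hA (v : VG) : PosLe H εH (h (verA v)) (h infA) := hpm.1 _ _ (.single (.verA_infA v))
  have hB (v : VG) : ¬ PosLe H εH (h (verB v)) (h infA) := fun hle =>
    not_verB_posLe_infA v ((hpm.posLe_map_iff hsurj (by simp [maxima])).1 hle)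
  refine ⟨fun hinf => ⟨fun v => ?_, fun v => ?_⟩, fun hinf => ⟨fun v => ?_, fun v => ?_⟩⟩
  · obtain ⟨w, hw | hw⟩ := hcopy _ (card_maxAbove_verA hεG v)
    · exact ⟨w, hw⟩
    · exact absurd (hinf ▸ hw ▸ hA v) (not_verB_posLe_infA w)
  · obtain ⟨w, hw | hw⟩ := hcopy _ (card_maxAbove_verB hεG v)
    · exact absurd (hinf ▸ hw ▸ .single (.verA_infA w)) (hB v)
    · exact ⟨w, hw⟩
  · obtain ⟨w, hw | hw⟩ := hcopy _ (card_maxAbove_verA hεG v)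
    · exact absurd (hinf ▸ hw ▸ hA v) (not_verA_posLe_infB w)
    · exact ⟨w, hw⟩
  · obtain ⟨w, hw | hw⟩ := hcopy _ (card_maxAbove_verB hεG v)
    · exact ⟨w, hw⟩
    · exact absurd (hinf ▸ hw ▸ .single (.verB_infB w)) (hB v)

theorem vertexCopies_map_into_vertexCopies {VG VH : Type} [Fintype VG] [Fintype VH] [Nonempty VH]
    (G : SimpleGraph VG) (H : SimpleGraph VH)
    (εG : ↥G.edgeSet → VG × VG) (hεG : OrientOK G εG)
    (εH : ↥H.edgeSet → VH × VH) (hεH : OrientOK H εH)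
    (h : PosElem VG ↥G.edgeSet → PosElem VH ↥H.edgeSet)
    (hsurj : Function.Surjective h)
    (hpm : IsPMorphismRel (PosLe G εG) (PosLe H εH) h) :
    (h PosElem.infA = PosElem.infA →
      (∀ v : VG, ∃ w : VH, h (PosElem.verA v) = PosElem.verA w) ∧
      (∀ v : VG, ∃ w : VH, h (PosElem.verB v) = PosElem.verB w)) ∧
    (h PosElem.infA = PosElem.infB →
      (∀ v : VG, ∃ w : VH, h (PosElem.verA v) = PosElem.verB w) ∧
      (∀ v : VG, ∃ w : VH, h (PosElem.verB v) = PosElem.verA w)) :=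
  vertexCopies_map_into_vertexCopies_general G H εG hεG εH h hsurj hpm
end

section
/- Let G and H be finite simple graphs such that H has at least one vertex, and let h be a surjective p-morphism from Pos(G) onto Pos(H). Then h(V^G) ⊆ V^H. Moreover, for every v ∈ V^G: if h(∞_a) = ∞_a then h(v_a) = h(v)_a and h(v_b) = h(v)_b, and if h(∞_a) = ∞_b then h(v_a) = h(v)_b and h(v_b) = h(v)_a. -/
/-!
The maximal elements of `Pos(G)` are `⊤₁, ⊤₂, ∞_a, ∞_b`, and every element lies below one of
them. A surjective p-morphism `h` maps the maximal elements bijectively onto the maximal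
elements, i.e. induces a permutation `σ` of these four, and by (HP) and (BP) the set of maximal
elements above `h x` is the `σ`-image of the set above `x`. Vertices are the only elements with
all four maxima above them, so `h(V^G) ⊆ V^H`. If `h v = w`, then `h v_a` and `h v_b` lie above
`w` and have exactly three maxima above them, so each is `w_a` or `w_b`; their sets of maxima
differ because `σ` is injective, and since `h ∞_a = σ ∞_a` lies above `h v_a`, it decides which
is which.
-/

open Finset Function

section PMorphism

variable {α β : Type} {leP : α → α → Prop} {leQ : β → β → Prop} {h : α → β}

def IsMaxRel (le : α → α → Prop) (x : α) : Prop :=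
  ∀ y, le x y → y = x

namespace IsPMorphismRel

theorem isMaxRel_apply (hpm : IsPMorphismRel leP leQ h) {x : α} (hx : IsMaxRel leP x) :
    IsMaxRel leQ (h x) := by
  intro y hy
  obtain ⟨z, hxz, rfl⟩ := hpm.2 x y hy
  rw [hx z hxz]

theorem exists_isMaxRel_le_apply_eq (hpm : IsPMorphismRel leP leQ h)
    (htrans : ∀ {a b c}, leP a b → leP b c → leP a c)
    (hmax : ∀ x, ∃ m, IsMaxRel leP m ∧ leP x m) {x : α} {y : β} (hy : IsMaxRel leQ y)
    (hxy : leQ (h x) y) : ∃ m, IsMaxRel leP m ∧ leP x m ∧ h m = y := by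
  obtain ⟨z, hxz, rfl⟩ := hpm.2 x y hxy
  obtain ⟨m, hm, hzm⟩ := hmax z
  exact ⟨m, hm, htrans hxz hzm, hy _ (hpm.1 z m hzm)⟩

theorem exists_isMaxRel_apply_eq (hpm : IsPMorphismRel leP leQ h) (hsurj : Surjective h)
    (hmax : ∀ x, ∃ m, IsMaxRel leP m ∧ leP x m) {y : β} (hy : IsMaxRel leQ y) :
    ∃ m, IsMaxRel leP m ∧ h m = y := by
  obtain ⟨x, rfl⟩ := hsurj y
  obtain ⟨m, hm, hxm⟩ := hmax x
  exact ⟨m, hm, hy _ (hpm.1 x m hxm)⟩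

end IsPMorphismRel

end PMorphism

namespace PosElem

inductive Apex
  | top1
  | top2
  | infA
  | infB
  deriving DecidableEq

instance : Fintype Apex :=
  ⟨{.top1, .top2, .infA, .infB}, fun m => by cases m <;> decide⟩

variable {V E : Type}

def ofApex : Apex → PosElem V E
  | .top1 => top1
  | .top2 => top2
  | .infA => infA
  | .infB => infB

theorem ofApex_injective : Injective (ofApex : Apex → PosElem V E) := by
  intro m m' h
  cases m <;> cases m' <;> first | rfl | cases h

/-- The maximal elements above an element of `Pos(G)` (see `le_ofApex_iff`). -/
def apexes : PosElem V E → Finset Apex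
  | ver _ => univ
  | verA _ => {.top1, .top2, .infA}
  | verB _ => {.top1, .top2, .infB}
  | edge1 _ | edge2 _ => {.top1, .top2}
  | top1 => {.top1}
  | top2 => {.top2}
  | infA => {.infA}
  | infB => {.infB}

def vertsBelow (ε : E → V × V) : PosElem V E → Set V
  | ver v | verA v | verB v => {v}
  | edge1 e | edge2 e => {(ε e).1, (ε e).2}
  | _ => Set.univ

theorem apexes_ofApex (m : Apex) : apexes (ofApex m : PosElem V E) = {m} := by
  cases m <;> rfl

theorem apexes_nonempty (x : PosElem V E) : (apexes x).Nonempty := by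
  cases x <;> simp only [apexes] <;> decide

theorem exists_eq_ver_of_apexes_eq_univ {x : PosElem V E} (hx : apexes x = univ) :
    ∃ v, x = ver v := by
  cases x <;> simp only [apexes] at hx <;> first | exact ⟨_, rfl⟩ | exact absurd hx (by decide)

theorem exists_eq_verA_or_eq_verB_of_card_apexes {x : PosElem V E} (hx : (apexes x).card = 3) :
    ∃ v, x = verA v ∨ x = verB v := by
  cases x <;> simp only [apexes] at hx <;>
    first | exact ⟨_, .inl rfl⟩ | exact ⟨_, .inr rfl⟩ | exact absurd hx (by decide)

end PosElem

open PosElem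

section PosOrder

variable {V : Type} {G : SimpleGraph V} {ε : G.edgeSet → V × V}

theorem PosCov.apexes_subset {x y : PosElem V G.edgeSet} (hxy : PosCov G ε x y) :
    apexes y ⊆ apexes x := by
  cases hxy <;> simp [apexes]

theorem PosLe.apexes_subset {x y : PosElem V G.edgeSet} (hxy : PosLe G ε x y) :
    apexes y ⊆ apexes x := by
  induction hxy with
  | refl => rfl
  | tail _ hyz ih => exact hyz.apexes_subset.trans ih

theorem PosCov.vertsBelow_subset {x y : PosElem V G.edgeSet} (hxy : PosCov G ε x y) :
    vertsBelow ε x ⊆ vertsBelow ε y := by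
  cases hxy <;> simp [vertsBelow]

theorem PosLe.vertsBelow_subset {x y : PosElem V G.edgeSet} (hxy : PosLe G ε x y) :
    vertsBelow ε x ⊆ vertsBelow ε y := by
  induction hxy with
  | refl => rfl
  | tail _ hyz ih => exact ih.trans hyz.vertsBelow_subset

theorem eq_of_ofApex_le {m : Apex} {y : PosElem V G.edgeSet} (hy : PosLe G ε (ofApex m) y) :
    y = ofApex m := by
  rcases hy.cases_head with rfl | ⟨c, hc, -⟩
  · rfl
  · cases m <;> cases hc

theorem verA_le_top_and_verB_le_top (hε : OrientOK G ε) (v : V) {t : Apex}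
    (ht : t = .top1 ∨ t = .top2) :
    PosLe G ε (verA v) (ofApex t) ∧ PosLe G ε (verB v) (ofApex t) := by
  have edge_le : ∀ e, PosLe G ε (edge1 e) (ofApex t) ∧ PosLe G ε (edge2 e) (ofApex t) := by
    rcases ht with rfl | rfl
    exacts [fun e => ⟨.single (.edge1_top1 e), .single (.edge2_top1 e)⟩,
      fun e => ⟨.single (.edge1_top2 e), .single (.edge2_top2 e)⟩]
  by_cases hv : ∀ w, ¬ G.Adj v w
  · rcases ht with rfl | rfl
    exacts [⟨.single (.isolA_top1 v hv), .single (.isolB_top1 v hv)⟩,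
      ⟨.single (.isolA_top2 v hv), .single (.isolB_top2 v hv)⟩]
  push Not at hv
  obtain ⟨w, hvw⟩ := hv
  let e : G.edgeSet := ⟨s(v, w), hvw⟩
  rcases Sym2.eq_iff.mp (hε e) with ⟨hv, -⟩ | ⟨hv, -⟩
  · rw [hv]
    exact ⟨.head (.ua_edge1 e) (edge_le e).1, .head (.ub_edge2 e) (edge_le e).2⟩
  · rw [hv]
    exact ⟨.head (.va_edge2 e) (edge_le e).2, .head (.vb_edge1 e) (edge_le e).1⟩

theorem verA_le_ofApex (hε : OrientOK G ε) (v : V) {m : Apex} (hm : m ≠ .infB) :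
    PosLe G ε (verA v) (ofApex m) := by
  cases m
  case infA => exact .single (.verA_infA v)
  case infB => exact absurd rfl hm
  all_goals exact (verA_le_top_and_verB_le_top hε v (by simp)).1

theorem verB_le_ofApex (hε : OrientOK G ε) (v : V) {m : Apex} (hm : m ≠ .infA) :
    PosLe G ε (verB v) (ofApex m) := by
  cases m
  case infB => exact .single (.verB_infB v)
  case infA => exact absurd rfl hm
  all_goals exact (verA_le_top_and_verB_le_top hε v (by simp)).2

theorem le_ofApex_of_mem (hε : OrientOK G ε) {x : PosElem V G.edgeSet} {m : Apex}
    (hm : m ∈ apexes x) : PosLe G ε x (ofApex m) := by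
  cases x with
  | ver v =>
    by_cases hb : m = .infB
    · exact hb ▸ .head (.ver_verB v) (verB_le_ofApex hε v (by decide))
    · exact .head (.ver_verA v) (verA_le_ofApex hε v hb)
  | verA v => exact verA_le_ofApex hε v (by rintro rfl; simp [apexes] at hm)
  | verB v => exact verB_le_ofApex hε v (by rintro rfl; simp [apexes] at hm)
  | edge1 e =>
    simp only [apexes, mem_insert, mem_singleton] at hm
    rcases hm with rfl | rfl
    exacts [.single (.edge1_top1 e), .single (.edge1_top2 e)]
  | edge2 e =>
    simp only [apexes, mem_insert, mem_singleton] at hm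
    rcases hm with rfl | rfl
    exacts [.single (.edge2_top1 e), .single (.edge2_top2 e)]
  | _ =>
    simp only [apexes, mem_singleton] at hm
    exact hm ▸ .refl

theorem le_ofApex_iff (hε : OrientOK G ε) {x : PosElem V G.edgeSet} {m : Apex} :
    PosLe G ε x (ofApex m) ↔ m ∈ apexes x := by
  refine ⟨fun hx => ?_, le_ofApex_of_mem hε⟩
  simpa [apexes_ofApex] using hx.apexes_subset

theorem isMaxRel_posLe_iff (hε : OrientOK G ε) {x : PosElem V G.edgeSet} :
    IsMaxRel (PosLe G ε) x ↔ ∃ m, x = ofApex m := by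
  constructor
  · intro hx
    obtain ⟨m, hm⟩ := apexes_nonempty x
    exact ⟨m, (hx _ (le_ofApex_of_mem hε hm)).symm⟩
  · rintro ⟨m, rfl⟩ y hy
    exact eq_of_ofApex_le hy

theorem exists_isMaxRel_posLe (hε : OrientOK G ε) (x : PosElem V G.edgeSet) :
    ∃ m, IsMaxRel (PosLe G ε) m ∧ PosLe G ε x m := by
  obtain ⟨m, hm⟩ := apexes_nonempty x
  exact ⟨ofApex m, (isMaxRel_posLe_iff hε).2 ⟨m, rfl⟩, le_ofApex_of_mem hε hm⟩

theorem eq_verA_or_eq_verB_of_ver_le {w : V} {y : PosElem V G.edgeSet}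
    (hy : PosLe G ε (ver w) y) (h3 : (apexes y).card = 3) : y = verA w ∨ y = verB w := by
  obtain ⟨u, rfl | rfl⟩ := exists_eq_verA_or_eq_verB_of_card_apexes h3 <;>
  · have hw := hy.vertsBelow_subset (by simp [vertsBelow] : w ∈ vertsBelow ε (ver w))
    simp_all [vertsBelow]

end PosOrder

section PMorphismPos

variable {VG VH : Type} {G : SimpleGraph VG} {H : SimpleGraph VH}
  {εG : G.edgeSet → VG × VG} {εH : H.edgeSet → VH × VH}
  {h : PosElem VG G.edgeSet → PosElem VH H.edgeSet}

theorem IsPMorphismRel.exists_bijective_apex_map (hεG : OrientOK G εG) (hεH : OrientOK H εH)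
    (hpm : IsPMorphismRel (PosLe G εG) (PosLe H εH) h) (hsurj : Surjective h) :
    ∃ σ : Apex → Apex, Bijective σ ∧ ∀ m, h (ofApex m) = ofApex (σ m) := by
  have hmap : ∀ m, ∃ m', h (ofApex m) = ofApex m' := fun m =>
    (isMaxRel_posLe_iff hεH).1 (hpm.isMaxRel_apply ((isMaxRel_posLe_iff hεG).2 ⟨m, rfl⟩))
  choose σ hσ using hmap
  have hσ_surj : Surjective σ := by
    intro m'
    obtain ⟨x, hx, hxm'⟩ := hpm.exists_isMaxRel_apply_eq hsurj (exists_isMaxRel_posLe hεG)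
      ((isMaxRel_posLe_iff hεH).2 ⟨m', rfl⟩)
    obtain ⟨m, rfl⟩ := (isMaxRel_posLe_iff hεG).1 hx
    exact ⟨m, ofApex_injective ((hσ m).symm.trans hxm')⟩
  exact ⟨σ, ⟨Finite.injective_iff_surjective.2 hσ_surj, hσ_surj⟩, hσ⟩

theorem IsPMorphismRel.apexes_apply (hεG : OrientOK G εG) (hεH : OrientOK H εH)
    (hpm : IsPMorphismRel (PosLe G εG) (PosLe H εH) h) {σ : Apex → Apex}
    (hσ : ∀ m, h (ofApex m) = ofApex (σ m)) (x : PosElem VG G.edgeSet) :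
    apexes (h x) = (apexes x).image σ := by
  ext m'
  rw [mem_image, ← le_ofApex_iff hεH]
  constructor
  · intro hxm'
    obtain ⟨z, hz, hxz, hzm'⟩ := hpm.exists_isMaxRel_le_apply_eq Relation.ReflTransGen.trans
      (exists_isMaxRel_posLe hεG) ((isMaxRel_posLe_iff hεH).2 ⟨m', rfl⟩) hxm'
    obtain ⟨m, rfl⟩ := (isMaxRel_posLe_iff hεG).1 hz
    exact ⟨m, (le_ofApex_iff hεG).1 hxz, ofApex_injective ((hσ m).symm.trans hzm')⟩
  · rintro ⟨m, hm, rfl⟩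
    exact hσ m ▸ hpm.1 _ _ (le_ofApex_of_mem hεG hm)

end PMorphismPos

theorem vertices_map_into_vertices_general {VG VH : Type}
    (G : SimpleGraph VG) (H : SimpleGraph VH)
    (εG : ↥G.edgeSet → VG × VG) (hεG : OrientOK G εG)
    (εH : ↥H.edgeSet → VH × VH) (hεH : OrientOK H εH)
    (h : PosElem VG ↥G.edgeSet → PosElem VH ↥H.edgeSet)
    (hsurj : Function.Surjective h)
    (hpm : IsPMorphismRel (PosLe G εG) (PosLe H εH) h) :
    (∀ v : VG, ∃ w : VH, h (PosElem.ver v) = PosElem.ver w) ∧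
    (∀ (v : VG) (w : VH), h (PosElem.ver v) = PosElem.ver w →
      (h PosElem.infA = PosElem.infA →
        h (PosElem.verA v) = PosElem.verA w ∧ h (PosElem.verB v) = PosElem.verB w) ∧
      (h PosElem.infA = PosElem.infB →
        h (PosElem.verA v) = PosElem.verB w ∧ h (PosElem.verB v) = PosElem.verA w)) := by
  obtain ⟨σ, hσ_bij, hσ⟩ := hpm.exists_bijective_apex_map hεG hεH hsurj
  have hap := hpm.apexes_apply hεG hεH hσ
  refine ⟨fun v => exists_eq_ver_of_apexes_eq_univ ?_, fun v w hw => ?_⟩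
  · rw [hap]
    exact image_univ_of_surjective hσ_bij.2
  have hcard : ∀ x, (apexes (h x)).card = (apexes x).card := fun x => by
    rw [hap, card_image_of_injective _ hσ_bij.1]
  have hA := eq_verA_or_eq_verB_of_ver_le (hw ▸ hpm.1 _ _ (.single (.ver_verA v)))
    (by rw [hcard]; rfl)
  have hB := eq_verA_or_eq_verB_of_ver_le (hw ▸ hpm.1 _ _ (.single (.ver_verB v)))
    (by rw [hcard]; rfl)
  have hne : h (verA v) ≠ h (verB v) := fun e => absurd
    (image_injective hσ_bij.1 ((hap _).symm.trans ((congrArg apexes e).trans (hap _))))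
    (by simp only [apexes]; decide)
  have hmem : σ .infA ∈ apexes (h (verA v)) := by
    rw [hap]
    exact mem_image_of_mem _ (by simp [apexes])
  have hσA : ∀ m, h infA = ofApex m → σ .infA = m := fun m e =>
    ofApex_injective ((hσ .infA).symm.trans e)
  refine ⟨fun e => ?_, fun e => ?_⟩
  · rw [hσA .infA e] at hmem
    have hvA : h (verA v) = verA w := hA.resolve_right fun hA => by simp [hA, apexes] at hmem
    exact ⟨hvA, hB.resolve_left (hvA ▸ hne.symm)⟩
  · rw [hσA .infB e] at hmem
    have hvA : h (verA v) = verB w := hA.resolve_left fun hA => by simp [hA, apexes] at hmem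
    exact ⟨hvA, hB.resolve_right (hvA ▸ hne.symm)⟩

theorem vertices_map_into_vertices {VG VH : Type} [Fintype VG] [Fintype VH] [Nonempty VH]
    (G : SimpleGraph VG) (H : SimpleGraph VH)
    (εG : ↥G.edgeSet → VG × VG) (hεG : OrientOK G εG)
    (εH : ↥H.edgeSet → VH × VH) (hεH : OrientOK H εH)
    (h : PosElem VG ↥G.edgeSet → PosElem VH ↥H.edgeSet)
    (hsurj : Function.Surjective h)
    (hpm : IsPMorphismRel (PosLe G εG) (PosLe H εH) h) :
    (∀ v : VG, ∃ w : VH, h (PosElem.ver v) = PosElem.ver w) ∧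
    (∀ (v : VG) (w : VH), h (PosElem.ver v) = PosElem.ver w →
      (h PosElem.infA = PosElem.infA →
        h (PosElem.verA v) = PosElem.verA w ∧ h (PosElem.verB v) = PosElem.verB w) ∧
      (h PosElem.infA = PosElem.infB →
        h (PosElem.verA v) = PosElem.verB w ∧ h (PosElem.verB v) = PosElem.verA w)) :=
  vertices_map_into_vertices_general G H εG hεG εH hεH h hsurj hpm
end

section
/- Let G and H be finite simple graphs such that H has at least one vertex, and let g be a surjective locally surjective homomorphism from G onto H. Then there exists a surjective p-morphism h from Pos(G) onto Pos(H) such that h(x) = x for x ∈ {⊤₁, ⊤₂, ∞_a, ∞_b}, h(v) = g(v), h(v_a) = g(v)_a and h(v_b) = g(v)_b for every v ∈ V^G, and, for every edge e = uv of G with u_a, v_b ⋖ e_i in Pos(G), h(e_i) is the copy (g(u)g(v))_j of the edge g(u)g(v) of H satisfying g(u)_a, g(v)_b ⋖ (g(u)g(v))_j in Pos(H). -/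
/-- A locally surjective graph homomorphism: the homomorphism property (HP) and
the backward property (BP) for graphs. -/
def IsLocallySurjHom {VG VH : Type} (G : SimpleGraph VG) (H : SimpleGraph VH)
    (g : VG → VH) : Prop :=
  (∀ u v : VG, G.Adj u v → H.Adj (g u) (g v)) ∧
  (∀ (u : VG) (w : VH), H.Adj (g u) w → ∃ v : VG, G.Adj u v ∧ g v = w)

/-!
The copies of an edge in `Pos(G)` are exactly its two darts: for the chosen pair `(u, v)`, `e₁`
is the dart `(u, v)` and `e₂` the dart `(v, u)`, and `x_a`, `y_b` lie below the copy of a dart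
`(x, y)`. So `h` sends the copy of a dart `d` to the copy of `g ∘ d`. As `g` is a homomorphism
this preserves covers; local surjectivity lifts every dart of `H` leaving `g u` to a dart of `G`
leaving `u`, which is the backward property on covers, and it also makes `g` preserve and reflect
isolated vertices. Both properties pass to the reflexive-transitive closures, and surjectivity of
`g` lets every dart of `H` be lifted, so `h` is onto.
-/

open SimpleGraph

theorem isPMorphismRel_reflTransGen {α β : Type} {r : α → α → Prop}
    {s : β → β → Prop} {f : α → β} (hmap : ∀ x y, r x y → s (f x) (f y))
    (hback : ∀ x y, s (f x) y → ∃ z, r x z ∧ f z = y) :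
    IsPMorphismRel (Relation.ReflTransGen r) (Relation.ReflTransGen s) f := by
  refine ⟨fun x y hxy => hxy.lift f hmap, fun x y hxy => ?_⟩
  induction hxy with
  | refl => exact ⟨x, .refl, rfl⟩
  | tail _ hyy' ih =>
    obtain ⟨z, hxz, rfl⟩ := ih
    obtain ⟨z', hzz', rfl⟩ := hback z _ hyy'
    exact ⟨z', hxz.tail hzz', rfl⟩

section Darts

variable {V : Type} {G : SimpleGraph V} {ε : G.edgeSet → V × V}

def OrientOK.dart (hε : OrientOK G ε) (e : G.edgeSet) : G.Dart :=
  ⟨ε e, by simpa [hε e] using e.2⟩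

theorem OrientOK.dart_edge (hε : OrientOK G ε) (e : G.edgeSet) : (hε.dart e).edge = e :=
  (hε e).symm

theorem OrientOK.exists_dart_eq (hε : OrientOK G ε) (d : G.Dart) :
    ∃ e, d = hε.dart e ∨ d = (hε.dart e).symm :=
  ⟨⟨d.edge, d.edge_mem⟩, (dart_edge_eq_iff _ _).1 (hε.dart_edge ⟨d.edge, d.edge_mem⟩).symm⟩

open Classical in
noncomputable def edgeCopy (ε : G.edgeSet → V × V) (d : G.Dart) : PosElem V G.edgeSet :=
  if (ε ⟨d.edge, d.edge_mem⟩).1 = d.fst then .edge1 ⟨d.edge, d.edge_mem⟩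
  else .edge2 ⟨d.edge, d.edge_mem⟩

theorem edgeCopy_eq_edge1_or_edge2 (d : G.Dart) :
    edgeCopy ε d = .edge1 ⟨d.edge, d.edge_mem⟩ ∨ edgeCopy ε d = .edge2 ⟨d.edge, d.edge_mem⟩ := by
  unfold edgeCopy
  split_ifs <;> simp

theorem OrientOK.edgeCopy_dart (hε : OrientOK G ε) (e : G.edgeSet) :
    edgeCopy ε (hε.dart e) = .edge1 e := by
  have he : (⟨(hε.dart e).edge, (hε.dart e).edge_mem⟩ : G.edgeSet) = e :=
    Subtype.ext (hε.dart_edge e)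
  unfold edgeCopy
  rw [if_pos (by rw [he]; rfl), he]

theorem OrientOK.edgeCopy_dart_symm (hε : OrientOK G ε) (e : G.edgeSet) :
    edgeCopy ε (hε.dart e).symm = .edge2 e := by
  have he : (⟨(hε.dart e).symm.edge, (hε.dart e).symm.edge_mem⟩ : G.edgeSet) = e :=
    Subtype.ext ((Dart.edge_symm _).trans (hε.dart_edge e))
  unfold edgeCopy
  rw [if_neg (by rw [he]; exact (hε.dart e).fst_ne_snd), he]

theorem OrientOK.posCov_verA_edgeCopy_iff (hε : OrientOK G ε) {u : V} {d : G.Dart} :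
    PosCov G ε (.verA u) (edgeCopy ε d) ↔ d.fst = u := by
  obtain ⟨e, rfl | rfl⟩ := hε.exists_dart_eq d
  · rw [hε.edgeCopy_dart]
    exact ⟨by rintro ⟨⟩; rfl, by rintro rfl; exact .ua_edge1 e⟩
  · rw [hε.edgeCopy_dart_symm]
    exact ⟨by rintro ⟨⟩; rfl, by rintro rfl; exact .va_edge2 e⟩

theorem OrientOK.posCov_verB_edgeCopy_iff (hε : OrientOK G ε) {v : V} {d : G.Dart} :
    PosCov G ε (.verB v) (edgeCopy ε d) ↔ d.snd = v := by
  obtain ⟨e, rfl | rfl⟩ := hε.exists_dart_eq d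
  · rw [hε.edgeCopy_dart]
    exact ⟨by rintro ⟨⟩; rfl, by rintro rfl; exact .vb_edge1 e⟩
  · rw [hε.edgeCopy_dart_symm]
    exact ⟨by rintro ⟨⟩; rfl, by rintro rfl; exact .ub_edge2 e⟩

end Darts

section Covers

variable {V : Type} {G : SimpleGraph V} {ε : G.edgeSet → V × V}

theorem posCov_ver_iff {v : V} {y : PosElem V G.edgeSet} :
    PosCov G ε (.ver v) y ↔ y = .verA v ∨ y = .verB v := by
  constructor
  · rintro ⟨⟩ <;> simp
  · rintro (rfl | rfl)
    exacts [.ver_verA v, .ver_verB v]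

theorem OrientOK.posCov_verA_iff (hε : OrientOK G ε) {u : V} {y : PosElem V G.edgeSet} :
    PosCov G ε (.verA u) y ↔ y = .infA ∨ ((∀ w, ¬G.Adj u w) ∧ (y = .top1 ∨ y = .top2)) ∨
      ∃ d : G.Dart, d.fst = u ∧ y = edgeCopy ε d := by
  constructor
  · rintro (_ | _ | _ | _ | _ | _ | _ | _ | ⟨_, hu⟩ | ⟨_, hu⟩ | _ | _ | ⟨e⟩ | _ | _ | ⟨e⟩)
    · exact .inl rfl
    · exact .inr (.inl ⟨hu, .inl rfl⟩)
    · exact .inr (.inl ⟨hu, .inr rfl⟩)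
    · exact .inr (.inr ⟨hε.dart e, rfl, (hε.edgeCopy_dart e).symm⟩)
    · exact .inr (.inr ⟨(hε.dart e).symm, rfl, (hε.edgeCopy_dart_symm e).symm⟩)
  · rintro (rfl | ⟨hu, rfl | rfl⟩ | ⟨d, rfl, rfl⟩)
    exacts [.verA_infA u, .isolA_top1 u hu, .isolA_top2 u hu, hε.posCov_verA_edgeCopy_iff.2 rfl]

theorem OrientOK.posCov_verB_iff (hε : OrientOK G ε) {v : V} {y : PosElem V G.edgeSet} :
    PosCov G ε (.verB v) y ↔ y = .infB ∨ ((∀ w, ¬G.Adj v w) ∧ (y = .top1 ∨ y = .top2)) ∨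
      ∃ d : G.Dart, d.snd = v ∧ y = edgeCopy ε d := by
  constructor
  · rintro (_ | _ | _ | _ | _ | _ | _ | _ | _ | _ | ⟨_, hv⟩ | ⟨_, hv⟩ | _ | ⟨e⟩ | ⟨e⟩ | _)
    · exact .inl rfl
    · exact .inr (.inl ⟨hv, .inl rfl⟩)
    · exact .inr (.inl ⟨hv, .inr rfl⟩)
    · exact .inr (.inr ⟨hε.dart e, rfl, (hε.edgeCopy_dart e).symm⟩)
    · exact .inr (.inr ⟨(hε.dart e).symm, rfl, (hε.edgeCopy_dart_symm e).symm⟩)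
  · rintro (rfl | ⟨hv, rfl | rfl⟩ | ⟨d, rfl, rfl⟩)
    exacts [.verB_infB v, .isolB_top1 v hv, .isolB_top2 v hv, hε.posCov_verB_edgeCopy_iff.2 rfl]

theorem posCov_edgeCopy_iff {d : G.Dart} {y : PosElem V G.edgeSet} :
    PosCov G ε (edgeCopy ε d) y ↔ y = .top1 ∨ y = .top2 := by
  rcases edgeCopy_eq_edge1_or_edge2 (ε := ε) d with h | h <;> rw [h] <;> constructor
  · rintro ⟨⟩ <;> simp
  · rintro (rfl | rfl)
    exacts [.edge1_top1 _, .edge1_top2 _]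
  · rintro ⟨⟩ <;> simp
  · rintro (rfl | rfl)
    exacts [.edge2_top1 _, .edge2_top2 _]

end Covers

namespace IsLocallySurjHom

variable {VG VH : Type} {G : SimpleGraph VG} {H : SimpleGraph VH} {g : VG → VH}

def toHom (hg : IsLocallySurjHom G H g) : G →g H :=
  ⟨g, hg.1 _ _⟩

theorem isolated_iff (hg : IsLocallySurjHom G H g) {u : VG} :
    (∀ w, ¬H.Adj (g u) w) ↔ ∀ v, ¬G.Adj u v := by
  refine ⟨fun hu v huv => hu _ (hg.1 u v huv), fun hu w huw => ?_⟩
  obtain ⟨v, huv, -⟩ := hg.2 u w huw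
  exact hu v huv

theorem exists_mapDart_eq_of_fst (hg : IsLocallySurjHom G H g) {u : VG} {d' : H.Dart}
    (hu : g u = d'.fst) : ∃ d : G.Dart, d.fst = u ∧ hg.toHom.mapDart d = d' := by
  obtain ⟨v, huv, hv⟩ := hg.2 u d'.snd (hu ▸ d'.adj)
  exact ⟨⟨(u, v), huv⟩, rfl, Dart.ext _ _ (Prod.ext hu hv)⟩

theorem exists_mapDart_eq_of_snd (hg : IsLocallySurjHom G H g) {v : VG} {d' : H.Dart}
    (hv : g v = d'.snd) : ∃ d : G.Dart, d.snd = v ∧ hg.toHom.mapDart d = d' := by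
  obtain ⟨d, hd, hdd'⟩ := hg.exists_mapDart_eq_of_fst (d' := d'.symm) hv
  exact ⟨d.symm, hd, by rw [← d'.symm_symm, ← hdd']; rfl⟩

end IsLocallySurjHom

section PosMap

variable {VG VH : Type} {G : SimpleGraph VG} {H : SimpleGraph VH}
  {εG : G.edgeSet → VG × VG} (hεG : OrientOK G εG) (εH : H.edgeSet → VH × VH) (φ : G →g H)

noncomputable def posMap : PosElem VG G.edgeSet → PosElem VH H.edgeSet
  | .ver v => .ver (φ v)
  | .verA v => .verA (φ v)
  | .verB v => .verB (φ v)
  | .edge1 e => edgeCopy εH (φ.mapDart (hεG.dart e))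
  | .edge2 e => edgeCopy εH (φ.mapDart (hεG.dart e).symm)
  | .top1 => .top1
  | .top2 => .top2
  | .infA => .infA
  | .infB => .infB

theorem posMap_edgeCopy (d : G.Dart) :
    posMap hεG εH φ (edgeCopy εG d) = edgeCopy εH (φ.mapDart d) := by
  obtain ⟨e, rfl | rfl⟩ := hεG.exists_dart_eq d
  · rw [hεG.edgeCopy_dart]; rfl
  · rw [hεG.edgeCopy_dart_symm]; rfl

end PosMap

section LocallySurjective

variable {VG VH : Type} {G : SimpleGraph VG} {H : SimpleGraph VH}
  {εG : G.edgeSet → VG × VG} {εH : H.edgeSet → VH × VH} {g : VG → VH}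
  (hεG : OrientOK G εG) (hεH : OrientOK H εH) (hg : IsLocallySurjHom G H g)

include hεH in
theorem posCov_posMap {x y : PosElem VG G.edgeSet} (hxy : PosCov G εG x y) :
    PosCov H εH (posMap hεG εH hg.toHom x) (posMap hεG εH hg.toHom y) := by
  cases hxy with
  | ver_verA | ver_verB | verA_infA | verB_infB => constructor
  | edge1_top1 | edge2_top1 => exact posCov_edgeCopy_iff.2 (.inl rfl)
  | edge1_top2 | edge2_top2 => exact posCov_edgeCopy_iff.2 (.inr rfl)
  | isolA_top1 v hv => exact .isolA_top1 _ (hg.isolated_iff.2 hv)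
  | isolA_top2 v hv => exact .isolA_top2 _ (hg.isolated_iff.2 hv)
  | isolB_top1 v hv => exact .isolB_top1 _ (hg.isolated_iff.2 hv)
  | isolB_top2 v hv => exact .isolB_top2 _ (hg.isolated_iff.2 hv)
  | ua_edge1 | va_edge2 => exact hεH.posCov_verA_edgeCopy_iff.2 rfl
  | vb_edge1 | ub_edge2 => exact hεH.posCov_verB_edgeCopy_iff.2 rfl

include hεH in
theorem exists_posCov_posMap_eq {x : PosElem VG G.edgeSet} {y : PosElem VH H.edgeSet}
    (hxy : PosCov H εH (posMap hεG εH hg.toHom x) y) :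
    ∃ z, PosCov G εG x z ∧ posMap hεG εH hg.toHom z = y := by
  cases x with
  | ver v =>
    obtain rfl | rfl := posCov_ver_iff.1 hxy
    exacts [⟨_, .ver_verA v, rfl⟩, ⟨_, .ver_verB v, rfl⟩]
  | verA u =>
    obtain rfl | ⟨hu, rfl | rfl⟩ | ⟨d', hd', rfl⟩ := hεH.posCov_verA_iff.1 hxy
    · exact ⟨_, .verA_infA u, rfl⟩
    · exact ⟨_, .isolA_top1 u (hg.isolated_iff.1 hu), rfl⟩
    · exact ⟨_, .isolA_top2 u (hg.isolated_iff.1 hu), rfl⟩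
    · obtain ⟨d, rfl, rfl⟩ := hg.exists_mapDart_eq_of_fst hd'.symm
      exact ⟨_, hεG.posCov_verA_edgeCopy_iff.2 rfl, posMap_edgeCopy hεG εH _ d⟩
  | verB v =>
    obtain rfl | ⟨hv, rfl | rfl⟩ | ⟨d', hd', rfl⟩ := hεH.posCov_verB_iff.1 hxy
    · exact ⟨_, .verB_infB v, rfl⟩
    · exact ⟨_, .isolB_top1 v (hg.isolated_iff.1 hv), rfl⟩
    · exact ⟨_, .isolB_top2 v (hg.isolated_iff.1 hv), rfl⟩
    · obtain ⟨d, rfl, rfl⟩ := hg.exists_mapDart_eq_of_snd hd'.symm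
      exact ⟨_, hεG.posCov_verB_edgeCopy_iff.2 rfl, posMap_edgeCopy hεG εH _ d⟩
  | edge1 e =>
    obtain rfl | rfl := posCov_edgeCopy_iff.1 hxy
    exacts [⟨_, .edge1_top1 e, rfl⟩, ⟨_, .edge1_top2 e, rfl⟩]
  | edge2 e =>
    obtain rfl | rfl := posCov_edgeCopy_iff.1 hxy
    exacts [⟨_, .edge2_top1 e, rfl⟩, ⟨_, .edge2_top2 e, rfl⟩]
  | top1 | top2 | infA | infB => cases hxy

include hεH in
theorem posMap_surjective (hsurj : Function.Surjective g) :
    Function.Surjective (posMap hεG εH hg.toHom) := by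
  have lift_edgeCopy (d' : H.Dart) : ∃ x, posMap hεG εH hg.toHom x = edgeCopy εH d' := by
    obtain ⟨u, hu⟩ := hsurj d'.fst
    obtain ⟨d, -, rfl⟩ := hg.exists_mapDart_eq_of_fst hu
    exact ⟨_, posMap_edgeCopy hεG εH _ d⟩
  rintro (w | w | w | f | f | _ | _ | _ | _)
  · obtain ⟨v, rfl⟩ := hsurj w; exact ⟨.ver v, rfl⟩
  · obtain ⟨v, rfl⟩ := hsurj w; exact ⟨.verA v, rfl⟩
  · obtain ⟨v, rfl⟩ := hsurj w; exact ⟨.verB v, rfl⟩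
  · simpa only [hεH.edgeCopy_dart] using lift_edgeCopy (hεH.dart f)
  · simpa only [hεH.edgeCopy_dart_symm] using lift_edgeCopy (hεH.dart f).symm
  exacts [⟨.top1, rfl⟩, ⟨.top2, rfl⟩, ⟨.infA, rfl⟩, ⟨.infB, rfl⟩]

end LocallySurjective

theorem extension_to_pMorphism_general {VG VH : Type}
    (G : SimpleGraph VG) (H : SimpleGraph VH)
    (εG : ↥G.edgeSet → VG × VG) (hεG : OrientOK G εG)
    (εH : ↥H.edgeSet → VH × VH) (hεH : OrientOK H εH)
    (g : VG → VH) (hgsurj : Function.Surjective g) (hg : IsLocallySurjHom G H g) :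
    ∃ h : PosElem VG ↥G.edgeSet → PosElem VH ↥H.edgeSet,
      Function.Surjective h ∧
      IsPMorphismRel (PosLe G εG) (PosLe H εH) h ∧
      h PosElem.top1 = PosElem.top1 ∧ h PosElem.top2 = PosElem.top2 ∧
      h PosElem.infA = PosElem.infA ∧ h PosElem.infB = PosElem.infB ∧
      (∀ v : VG, h (PosElem.ver v) = PosElem.ver (g v) ∧
        h (PosElem.verA v) = PosElem.verA (g v) ∧
        h (PosElem.verB v) = PosElem.verB (g v)) ∧
      (∀ (e : ↥G.edgeSet) (u v : VG) (x : PosElem VG ↥G.edgeSet),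
        (x = PosElem.edge1 e ∨ x = PosElem.edge2 e) →
        PosCov G εG (PosElem.verA u) x → PosCov G εG (PosElem.verB v) x →
        ∃ (f : ↥H.edgeSet) (y : PosElem VH ↥H.edgeSet),
          (f : Sym2 VH) = s(g u, g v) ∧
          (y = PosElem.edge1 f ∨ y = PosElem.edge2 f) ∧
          PosCov H εH (PosElem.verA (g u)) y ∧ PosCov H εH (PosElem.verB (g v)) y ∧
          h x = y) := by
  refine ⟨posMap hεG εH hg.toHom, posMap_surjective hεG hεH hg hgsurj,
    isPMorphismRel_reflTransGen (fun _ _ => posCov_posMap hεG hεH hg)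
      (fun _ _ => exists_posCov_posMap_eq hεG hεH hg),
    rfl, rfl, rfl, rfl, fun v => ⟨rfl, rfl, rfl⟩, ?_⟩
  intro e u v x hx hu hv
  obtain ⟨d, rfl⟩ : ∃ d, x = edgeCopy εG d := by
    rcases hx with rfl | rfl
    exacts [⟨_, (hεG.edgeCopy_dart e).symm⟩, ⟨_, (hεG.edgeCopy_dart_symm e).symm⟩]
  obtain rfl := hεG.posCov_verA_edgeCopy_iff.1 hu
  obtain rfl := hεG.posCov_verB_edgeCopy_iff.1 hv
  exact ⟨_, _, rfl, edgeCopy_eq_edge1_or_edge2 _, hεH.posCov_verA_edgeCopy_iff.2 rfl,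
    hεH.posCov_verB_edgeCopy_iff.2 rfl, posMap_edgeCopy hεG εH _ d⟩

theorem extension_to_pMorphism {VG VH : Type} [Fintype VG] [Fintype VH] [Nonempty VH]
    (G : SimpleGraph VG) (H : SimpleGraph VH)
    (εG : ↥G.edgeSet → VG × VG) (hεG : OrientOK G εG)
    (εH : ↥H.edgeSet → VH × VH) (hεH : OrientOK H εH)
    (g : VG → VH) (hgsurj : Function.Surjective g) (hg : IsLocallySurjHom G H g) :
    ∃ h : PosElem VG ↥G.edgeSet → PosElem VH ↥H.edgeSet,
      Function.Surjective h ∧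
      IsPMorphismRel (PosLe G εG) (PosLe H εH) h ∧
      h PosElem.top1 = PosElem.top1 ∧ h PosElem.top2 = PosElem.top2 ∧
      h PosElem.infA = PosElem.infA ∧ h PosElem.infB = PosElem.infB ∧
      (∀ v : VG, h (PosElem.ver v) = PosElem.ver (g v) ∧
        h (PosElem.verA v) = PosElem.verA (g v) ∧
        h (PosElem.verB v) = PosElem.verB (g v)) ∧
      (∀ (e : ↥G.edgeSet) (u v : VG) (x : PosElem VG ↥G.edgeSet),
        (x = PosElem.edge1 e ∨ x = PosElem.edge2 e) →
        PosCov G εG (PosElem.verA u) x → PosCov G εG (PosElem.verB v) x →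
        ∃ (f : ↥H.edgeSet) (y : PosElem VH ↥H.edgeSet),
          (f : Sym2 VH) = s(g u, g v) ∧
          (y = PosElem.edge1 f ∨ y = PosElem.edge2 f) ∧
          PosCov H εH (PosElem.verA (g u)) y ∧ PosCov H εH (PosElem.verB (g v)) y ∧
          h x = y) :=
  extension_to_pMorphism_general G H εG hεG εH hεH g hgsurj hg
end
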